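/- arXiv:2006.08175 — 6 statements merged into one kernel-verified Lean document; each statement's English description precedes it below -/
import Mathlib

section
/- Suppose J is naturally monotonically backward separable with representation maps {φ_t}_{t=0}^T and Γ_{x,t} ≠ ∅ for all x ∈ X_t and t ∈ {0,…,T−1}. Then for every k ∈ {0,…,T−1} and x ∈ X_k, inf_{u ∈ Γ_{x,k}} φ_k(x, u, inf_{(u(k+1),…,u(T−1)) ∈ Γ_{f(x,u,k),[k+1,T−1]}} φ_{k+1}(x(k+1),u(k+1), …, φ_T(x(T))…)) = inf_{(u(k),…,u(T−1)) ∈ Γ_{x,[k,T−1]}} φ_k(x(k),u(k), φ_{k+1}(x(k+1),u(k+1), …, φ_T(x(T))…)), where x(k) = x, x(t+1) = f(x(t),u(t),t) for t = k,…,T−1, and for k = T−1 the inner expression is read as φ_{T−1}(x,u,φ_T(f(x,u,T−1))); i.e. the order of the infimum and the composition of representation maps can be interchanged. -/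
open Set Filter MeasureTheory

/-- `nest φ φT u x t k` is the backward composition of representation maps
`φ t (x t) (u t) (φ (t+1) (x (t+1)) (u (t+1)) (… (φT (x (t+k))) …)))`
with `k` composition steps, terminating at time `t + k`. -/
def nest {α β : Type*} (φ : ℕ → α → β → ℝ → ℝ) (φT : α → ℝ)
    (u : ℕ → β) (x : ℕ → α) : ℕ → ℕ → ℝ
  | t, 0 => φT (x t)
  | t, k + 1 => φ t (x t) (u t) (nest φ φT u x (t + 1) k)

/-- `imSet φ φT X U t k` is the image of the representation map at time `t`
over its domain, where `k` is the number of remaining steps until the terminal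
time `t + k` (so `Image φ_t = imSet φ φT X U t (T - t)` when the horizon is `T`). -/
def imSet {α β : Type*} (φ : ℕ → α → β → ℝ → ℝ) (φT : α → ℝ)
    (X : ℕ → Set α) (U : Set β) : ℕ → ℕ → Set ℝ
  | t, 0 => φT '' X t
  | t, k + 1 =>
      {z | ∃ a ∈ X t, ∃ b ∈ U, ∃ w ∈ imSet φ φT X U (t + 1) k, z = φ t a b w}

/-- `J` is represented on its domain by the representation maps `φ, φT`
(backward composition with horizon `T`). -/
def IsRep {α β : Type*} (T : ℕ) (X : ℕ → Set α) (U : Set β)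
    (J : (ℕ → β) → (ℕ → α) → ℝ) (φ : ℕ → α → β → ℝ → ℝ) (φT : α → ℝ) : Prop :=
  ∀ u x, (∀ t, t < T → u t ∈ U) → (∀ t, t ≤ T → x t ∈ X t) →
    J u x = nest φ φT u x 0 T

/-- each representation map is monotone in its third argument on the image of
the next representation map. -/
def MonoRep {α β : Type*} (T : ℕ) (X : ℕ → Set α) (U : Set β)
    (φ : ℕ → α → β → ℝ → ℝ) (φT : α → ℝ) : Prop :=
  ∀ t, t < T → ∀ a ∈ X t, ∀ b ∈ U,
    ∀ z ∈ imSet φ φT X U (t + 1) (T - (t + 1)),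
      ∀ w ∈ imSet φ φT X U (t + 1) (T - (t + 1)),
        w ≤ z → φ t a b w ≤ φ t a b z

/-- each representation map is strictly monotone in its third argument. -/
def StrictMonoRep {α β : Type*} (T : ℕ) (X : ℕ → Set α) (U : Set β)
    (φ : ℕ → α → β → ℝ → ℝ) (φT : α → ℝ) : Prop :=
  ∀ t, t < T → ∀ a ∈ X t, ∀ b ∈ U,
    ∀ z ∈ imSet φ φT X U (t + 1) (T - (t + 1)),
      ∀ w ∈ imSet φ φT X U (t + 1) (T - (t + 1)),
        w < z → φ t a b w < φ t a b z

/-- each representation map is upper semi-continuous in its third argument along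
monotonically decreasing sequences in the image of the next representation map. -/
def USCRep {α β : Type*} (T : ℕ) (X : ℕ → Set α) (U : Set β)
    (φ : ℕ → α → β → ℝ → ℝ) (φT : α → ℝ) : Prop :=
  ∀ t, t < T → ∀ a ∈ X t, ∀ b ∈ U, ∀ z : ℕ → ℝ,
    (∀ i, z i ∈ imSet φ φT X U (t + 1) (T - (t + 1))) →
    (∀ i, z (i + 1) ≤ z i) →
    ∀ L : ℝ, Tendsto z atTop (nhds L) →
      Tendsto (fun i => φ t a b (z i)) atTop (nhds (φ t a b L))

/-- each representation map has bounded image. -/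
def BddRep {α β : Type*} (T : ℕ) (X : ℕ → Set α) (U : Set β)
    (φ : ℕ → α → β → ℝ → ℝ) (φT : α → ℝ) : Prop :=
  ∀ t, t ≤ T → ∃ R, 0 < R ∧ ∀ z ∈ imSet φ φT X U t (T - t), |z| < R

/-- `GamSeq T f X U x0 s u x` says that the input sequence `(u s, …, u (T-1))`
belongs to `Γ_{x0,[s,T-1]}`, with `x` the corresponding state sequence:
`x s = x0`, `x (t+1) = f (x t) (u t) t`, `u t ∈ Γ_{x t, t}` for `s ≤ t ≤ T-1`. -/
def GamSeq {α β : Type*} (T : ℕ) (f : α → β → ℕ → α) (X : ℕ → Set α)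
    (U : Set β) (x0 : α) (s : ℕ) (u : ℕ → β) (x : ℕ → α) : Prop :=
  x s = x0 ∧ ∀ t, s ≤ t → t < T →
    u t ∈ U ∧ x (t + 1) = f (x t) (u t) t ∧ x (t + 1) ∈ X (t + 1)

/-- `(u,x)` is feasible for the MSOP with horizon `T` initialized at `x0` at time `0`. -/
def Feas {α β : Type*} (T : ℕ) (f : α → β → ℕ → α) (X : ℕ → Set α)
    (U : Set β) (x0 : α) (u : ℕ → β) (x : ℕ → α) : Prop :=
  x 0 = x0 ∧ (∀ t, t ≤ T → x t ∈ X t) ∧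
    ∀ t, t < T → u t ∈ U ∧ x (t + 1) = f (x t) (u t) t

/-- `(u,x)` is feasible for the MSOP with horizon `T` initialized at `x0` at time `s`. -/
def FeasFrom {α β : Type*} (T : ℕ) (f : α → β → ℕ → α) (X : ℕ → Set α)
    (U : Set β) (x0 : α) (s : ℕ) (u : ℕ → β) (x : ℕ → α) : Prop :=
  x s = x0 ∧ (∀ t, s ≤ t → t ≤ T → x t ∈ X t) ∧
    ∀ t, s ≤ t → t < T → u t ∈ U ∧ x (t + 1) = f (x t) (u t) t

/-!
The costs-to-go from `x` at time `k` are the union, over `b ∈ Γ_{x,k}`, of the images under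
`φ_k(x, b, ·)` of the costs-to-go `S_b` from `f(x, b, k)` at time `k + 1`. Since the infimum of a
union is the infimum of the infima of its pieces, it suffices that `φ_k(x, b, inf S_b)` is the
infimum of `φ_k(x, b, S_b)`. Take a decreasing sequence in `S_b` converging to `inf S_b`: by upper
semicontinuity `φ_k(x, b, ·)` converges along it to `φ_k(x, b, inf S_b)`, which is therefore
below every `φ_k(x, b, w)`, `w ∈ S_b`, by monotonicity. Bounded images make every infimum a
genuine one, and `Γ ≠ ∅` makes every set of costs-to-go nonempty.
-/

/-- `Γ_{a,t}`. -/
def admissibleInputs {α β : Type*} (f : α → β → ℕ → α) (X : ℕ → Set α) (U : Set β)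
    (a : α) (t : ℕ) : Set β :=
  {b ∈ U | f a b t ∈ X (t + 1)}

/-- The costs-to-go `φ_s(x(s), u(s), …, φ_T(x(T))…)` over `Γ_{x0,[s,T-1]}`. -/
def tailCosts {α β : Type*} (T : ℕ) (f : α → β → ℕ → α) (X : ℕ → Set α) (U : Set β)
    (φ : ℕ → α → β → ℝ → ℝ) (φT : α → ℝ) (x0 : α) (s : ℕ) : Set ℝ :=
  {w | ∃ u xs, GamSeq T f X U x0 s u xs ∧ w = nest φ φT u xs s (T - s)}

theorem csInf_image_eq_csInf_biUnion {γ ι : Type*} [ConditionallyCompleteLattice γ]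
    {B : Set ι} {A : ι → Set γ} {c : ι → γ} (hc : ∀ i ∈ B, IsGLB (A i) (c i))
    (hne : (⋃ i ∈ B, A i).Nonempty) (hbdd : BddBelow (⋃ i ∈ B, A i)) :
    sInf (c '' B) = sInf (⋃ i ∈ B, A i) := by
  have hglb : IsGLB (c '' B) (sInf (⋃ i ∈ B, A i)) := by
    rw [image_eq_range, isGLB_iUnion_iff_of_isGLB (fun i : B => hc i i.2), iUnion_coe_set]
    exact isGLB_csInf hne hbdd
  obtain ⟨i, hi, -⟩ := mem_iUnion₂.mp hne.some_mem
  exact hglb.csInf_eq ⟨c i, mem_image_of_mem c hi⟩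

open Topology in
theorem isGLB_image_csInf {g : ℝ → ℝ} {D S : Set ℝ} (hSD : S ⊆ D) (hne : S.Nonempty)
    (hbdd : BddBelow S) (hmono : MonotoneOn g D)
    (husc : ∀ z : ℕ → ℝ, (∀ i, z i ∈ D) → (∀ i, z (i + 1) ≤ z i) →
      ∀ L, Tendsto z atTop (𝓝 L) → Tendsto (fun i => g (z i)) atTop (𝓝 (g L))) :
    IsGLB (g '' S) (g (sInf S)) := by
  obtain ⟨z, hanti, hlim, hzS⟩ := exists_seq_tendsto_sInf hne hbdd
  have hgz := husc z (fun i => hSD (hzS i)) (fun i => hanti (Nat.le_succ i)) _ hlim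
  refine ⟨?_, fun l hl => ge_of_tendsto' hgz fun i => hl (mem_image_of_mem g (hzS i))⟩
  rintro _ ⟨w, hw, rfl⟩
  rcases (csInf_le hbdd hw).eq_or_lt with heq | hlt
  · rw [heq]
  · exact le_of_tendsto hgz <| (hlim.eventually_lt_const hlt).mono fun i hi =>
      hmono (hSD (hzS i)) (hSD hw) hi.le

section Separable

variable {α β : Type*} {T : ℕ} {f : α → β → ℕ → α} {X : ℕ → Set α} {U : Set β}
  {φ : ℕ → α → β → ℝ → ℝ} {φT : α → ℝ}

theorem nest_congr {u u' : ℕ → β} {x x' : ℕ → α} {s : ℕ} (hx : ∀ t, s ≤ t → x t = x' t)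
    (hu : ∀ t, s ≤ t → u t = u' t) (j : ℕ) :
    nest φ φT u x s j = nest φ φT u' x' s j := by
  induction j generalizing s with
  | zero => exact congrArg φT (hx s le_rfl)
  | succ j ih =>
    rw [nest, nest, hx s le_rfl, hu s le_rfl,
      ih (fun t ht => hx t (by omega)) (fun t ht => hu t (by omega))]

theorem nest_mem_imSet {u : ℕ → β} {xs : ℕ → α} {s : ℕ} (j : ℕ)
    (hX : ∀ t, s ≤ t → t ≤ s + j → xs t ∈ X t) (hU : ∀ t, s ≤ t → t < s + j → u t ∈ U) :
    nest φ φT u xs s j ∈ imSet φ φT X U s j := by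
  induction j generalizing s with
  | zero => exact ⟨xs s, hX s le_rfl (by omega), rfl⟩
  | succ j ih =>
    exact ⟨xs s, hX s le_rfl (by omega), u s, hU s le_rfl (by omega), _,
      ih (fun t h1 h2 => hX t (by omega) (by omega)) (fun t h1 h2 => hU t (by omega) (by omega)),
      rfl⟩

namespace GamSeq

variable {x0 : α} {s : ℕ} {u : ℕ → β} {xs : ℕ → α}

theorem mem_X (h : GamSeq T f X U x0 s u xs) (hx0 : x0 ∈ X s) {t : ℕ} (hst : s ≤ t)
    (htT : t ≤ T) : xs t ∈ X t := by
  induction t, hst using Nat.le_induction with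
  | base => exact h.1 ▸ hx0
  | succ t hst _ => exact (h.2 t hst (by omega)).2.2

theorem mem_admissibleInputs (h : GamSeq T f X U x0 s u xs) (hs : s < T) :
    u s ∈ admissibleInputs f X U x0 s := by
  obtain ⟨hu, hstep, hmem⟩ := h.2 s le_rfl hs
  exact ⟨hu, h.1 ▸ hstep ▸ hmem⟩

theorem tail (h : GamSeq T f X U x0 s u xs) (hs : s < T) :
    GamSeq T f X U (f x0 (u s) s) (s + 1) u xs :=
  ⟨h.1 ▸ (h.2 s le_rfl hs).2.1, fun t ht htT => h.2 t (by omega) htT⟩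

theorem cons {b : β} (hb : b ∈ admissibleInputs f X U x0 s)
    (h : GamSeq T f X U (f x0 b s) (s + 1) u xs) :
    GamSeq T f X U x0 s (Function.update u s b) (Function.update xs s x0) := by
  refine ⟨Function.update_self .., fun t hst htT => ?_⟩
  rw [Function.update_of_ne (by omega : t + 1 ≠ s)]
  rcases hst.eq_or_lt with rfl | hlt
  · simp only [Function.update_self]
    exact ⟨hb.1, h.1, h.1 ▸ hb.2⟩
  · simp only [Function.update_of_ne hlt.ne']
    exact h.2 t hlt htT

end GamSeq

theorem tailCosts_subset_imSet {x0 : α} {s : ℕ} (hs : s ≤ T) (hx0 : x0 ∈ X s) :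
    tailCosts T f X U φ φT x0 s ⊆ imSet φ φT X U s (T - s) := by
  rintro _ ⟨u, xs, h, rfl⟩
  exact nest_mem_imSet _ (fun t h1 h2 => h.mem_X hx0 (t := t) h1 (by omega))
    (fun t h1 h2 => (h.2 t h1 (by omega)).1)

theorem BddRep.bddBelow (hBdd : BddRep T X U φ φT) {t : ℕ} (ht : t ≤ T) {S : Set ℝ}
    (hS : S ⊆ imSet φ φT X U t (T - t)) : BddBelow S := by
  obtain ⟨R, -, hR⟩ := hBdd t ht
  exact ⟨-R, fun z hz => (abs_lt.mp (hR z (hS hz))).1.le⟩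

theorem MonoRep.monotoneOn (hMono : MonoRep T X U φ φT) {t : ℕ} (ht : t < T) {a : α}
    (ha : a ∈ X t) {b : β} (hb : b ∈ U) :
    MonotoneOn (φ t a b) (imSet φ φT X U (t + 1) (T - (t + 1))) :=
  fun w hw z hz hwz => hMono t ht a ha b hb z hz w hw hwz

theorem apply_mem_tailCosts {x0 : α} {s : ℕ} (hs : s < T) {b : β}
    (hb : b ∈ admissibleInputs f X U x0 s) {w : ℝ}
    (hw : w ∈ tailCosts T f X U φ φT (f x0 b s) (s + 1)) :
    φ s x0 b w ∈ tailCosts T f X U φ φT x0 s := by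
  obtain ⟨u, xs, h, rfl⟩ := hw
  refine ⟨_, _, h.cons hb, ?_⟩
  rw [show T - s = T - (s + 1) + 1 by omega, nest, Function.update_self, Function.update_self,
    nest_congr (u := Function.update u s b) (x := Function.update xs s x0)
      (fun t ht => Function.update_of_ne (show t ≠ s by omega) ..)
      (fun t ht => Function.update_of_ne (show t ≠ s by omega) ..)]

theorem tailCosts_eq_biUnion {x0 : α} {s : ℕ} (hs : s < T) :
    tailCosts T f X U φ φT x0 s = ⋃ b ∈ admissibleInputs f X U x0 s,
      φ s x0 b '' tailCosts T f X U φ φT (f x0 b s) (s + 1) := by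
  refine Subset.antisymm ?_ ?_
  · rintro _ ⟨u, xs, h, rfl⟩
    refine mem_iUnion₂.mpr ⟨u s, h.mem_admissibleInputs hs, _, ⟨u, xs, h.tail hs, rfl⟩, ?_⟩
    rw [show T - s = T - (s + 1) + 1 by omega, nest, h.1]
  · simp only [iUnion_subset_iff, image_subset_iff]
    exact fun b hb w hw => apply_mem_tailCosts hs hb hw

theorem tailCosts_nonempty [Nonempty β]
    (hGam : ∀ t, t < T → ∀ a ∈ X t, ∃ b ∈ U, f a b t ∈ X (t + 1)) {s : ℕ} (hs : s ≤ T)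
    {x0 : α} (hx0 : x0 ∈ X s) : (tailCosts T f X U φ φT x0 s).Nonempty := by
  induction hs using Nat.decreasingInduction generalizing x0 with
  | self => exact ⟨_, fun _ => Classical.arbitrary β, fun _ => x0,
      ⟨rfl, fun t h1 h2 => absurd h2 (by omega)⟩, rfl⟩
  | of_succ s hs ih =>
    obtain ⟨b, hb⟩ := hGam s hs x0 hx0
    obtain ⟨w, hw⟩ := ih hb.2
    exact ⟨_, apply_mem_tailCosts hs hb hw⟩

end Separable

theorem nested_inf_eq_joint_inf_general
    {n m : ℕ} (T : ℕ)
    (X : ℕ → Set (Fin n → ℝ)) (U : Set (Fin m → ℝ))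
    (f : (Fin n → ℝ) → (Fin m → ℝ) → ℕ → (Fin n → ℝ))
    (φ : ℕ → (Fin n → ℝ) → (Fin m → ℝ) → ℝ → ℝ) (φT : (Fin n → ℝ) → ℝ)
    (hMono : MonoRep T X U φ φT)
    (hUSC : USCRep T X U φ φT) (hBdd : BddRep T X U φ φT)
    (hGam : ∀ t, t < T → ∀ a ∈ X t, ∃ b ∈ U, f a b t ∈ X (t + 1))
    (k : ℕ) (hk : k < T) (x : Fin n → ℝ) (hx : x ∈ X k) :
    sInf {y : ℝ | ∃ b ∈ U, f x b k ∈ X (k + 1) ∧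
        y = φ k x b (sInf {w : ℝ |
          ∃ u xs, GamSeq T f X U (f x b k) (k + 1) u xs ∧
            w = nest φ φT u xs (k + 1) (T - (k + 1))})} =
      sInf {y : ℝ | ∃ u xs, GamSeq T f X U x k u xs ∧
        y = nest φ φT u xs k (T - k)} := by
  have hinner : ∀ b ∈ admissibleInputs f X U x k,
      IsGLB (φ k x b '' tailCosts T f X U φ φT (f x b k) (k + 1))
        (φ k x b (sInf (tailCosts T f X U φ φT (f x b k) (k + 1)))) := fun b hb =>
    isGLB_image_csInf (tailCosts_subset_imSet hk hb.2) (tailCosts_nonempty hGam hk hb.2)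
      (hBdd.bddBelow hk (tailCosts_subset_imSet hk hb.2)) (hMono.monotoneOn hk hx hb.1)
      (hUSC k hk x hx b hb.1)
  have hjoint : tailCosts T f X U φ φT x k = _ := tailCosts_eq_biUnion hk
  have hne : (tailCosts T f X U φ φT x k).Nonempty := tailCosts_nonempty hGam hk.le hx
  have hbdd : BddBelow (tailCosts T f X U φ φT x k) :=
    hBdd.bddBelow hk.le (tailCosts_subset_imSet hk.le hx)
  rw [hjoint] at hne hbdd
  change _ = sInf (tailCosts T f X U φ φT x k)
  rw [hjoint, ← csInf_image_eq_csInf_biUnion hinner hne hbdd]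
  congr 1
  ext y
  simp only [mem_ofPred_eq, mem_image, admissibleInputs, and_assoc, eq_comm]
  rfl

/-- For a naturally monotonically backward separable cost with
nonempty feasible input sets, the order of the infimum and the composition of
representation maps can be interchanged: the nested infimum equals the joint
infimum over feasible input sequences `Γ_{x,[k,T-1]}`. -/
theorem nested_inf_eq_joint_inf
    {n m : ℕ} (T : ℕ) (hT : 1 ≤ T)
    (X : ℕ → Set (Fin n → ℝ)) (U : Set (Fin m → ℝ))
    (f : (Fin n → ℝ) → (Fin m → ℝ) → ℕ → (Fin n → ℝ))
    (J : (ℕ → Fin m → ℝ) → (ℕ → Fin n → ℝ) → ℝ)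
    (φ : ℕ → (Fin n → ℝ) → (Fin m → ℝ) → ℝ → ℝ) (φT : (Fin n → ℝ) → ℝ)
    (hRep : IsRep T X U J φ φT) (hMono : MonoRep T X U φ φT)
    (hUSC : USCRep T X U φ φT) (hBdd : BddRep T X U φ φT)
    (hGam : ∀ t, t < T → ∀ a ∈ X t, ∃ b ∈ U, f a b t ∈ X (t + 1))
    (k : ℕ) (hk : k < T) (x : Fin n → ℝ) (hx : x ∈ X k) :
    sInf {y : ℝ | ∃ b ∈ U, f x b k ∈ X (k + 1) ∧
        y = φ k x b (sInf {w : ℝ |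
          ∃ u xs, GamSeq T f X U (f x b k) (k + 1) u xs ∧
            w = nest φ φT u xs (k + 1) (T - (k + 1))})} =
      sInf {y : ℝ | ∃ u xs, GamSeq T f X U x k u xs ∧
        y = nest φ φT u xs k (T - k)} :=
  nested_inf_eq_joint_inf_general T X U f φ φT hMono hUSC hBdd hGam k hk x hx
end

section
/- Suppose J(u,x) = Σ_{t=0}^{T−1} c_t(x(t),u(t)) + c_T(x(T)) where each c_t : X_t × U → ℝ is bounded on X_t × U, c_T : X_T → ℝ is bounded on X_T, Γ_{x,t} ≠ ∅ for all x ∈ X_t and t ∈ {0,…,T−1}, and F : ℝ^n × {0,…,T} → ℝ satisfies Bellman's Equation (F(x,T) = c_T(x) on X_T and F(x,t) = inf_{u ∈ Γ_{x,t}} { c_t(x,u) + F(f(x,u,t), t+1) } on X_t for t ∈ {0,…,T−1}). Then a pair (u*, x*) solves the MSOP initialized at x_0 (i.e., is feasible and minimizes J over feasible pairs) if and only if x*(0) = x_0, x*(k+1) = f(x*(k),u*(k),k) and u*(k) ∈ arg inf_{u ∈ Γ_{x*(k),k}} { c_k(x*(k),u) + F(f(x*(k),u,k), k+1) } for every k ∈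 {0,…,T−1}. -/
open Set Filter MeasureTheory

/-!
Along a feasible pair the cost telescopes: `J(u,x) = F(x₀,0) + Σₖ gₖ`, where
`gₖ = c_k(x(k),u(k)) + F(x(k+1),k+1) - F(x(k),k)` measures how far `u(k)` misses the infimum in
Bellman's equation. Lower bounds on the costs keep these infima finite, so `gₖ ≥ 0`. Since the sets
`Γ_{x,t}` are nonempty, picking each `u(k)` greedily within `ε / (T + 1)` of the infimum yields a
feasible pair with `Σₖ gₖ ≤ ε`; hence `F(x₀,0)` is the optimal value, and a feasible pair is optimal
exactly when all its gaps vanish, i.e. when every `u*(k)` attains the infimum.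
-/

section Bellman

variable {α β : Type*} {T : ℕ} {X : ℕ → Set α} {U : Set β} {f : α → β → ℕ → α}
  {c : ℕ → α → β → ℝ} {cT : α → ℝ} {F : α → ℕ → ℝ}

def totalCost (T : ℕ) (c : ℕ → α → β → ℝ) (cT : α → ℝ) (u : ℕ → β) (x : ℕ → α) : ℝ :=
  (∑ t ∈ Finset.range T, c t (x t) (u t)) + cT (x T)

def bellmanValues (X : ℕ → Set α) (U : Set β) (f : α → β → ℕ → α) (c : ℕ → α → β → ℝ)
    (F : α → ℕ → ℝ) (t : ℕ) (a : α) : Set ℝ :=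
  {y | ∃ b ∈ U, f a b t ∈ X (t + 1) ∧ y = c t a b + F (f a b t) (t + 1)}

def SolvesBellman (T : ℕ) (X : ℕ → Set α) (U : Set β) (f : α → β → ℕ → α)
    (c : ℕ → α → β → ℝ) (cT : α → ℝ) (F : α → ℕ → ℝ) : Prop :=
  (∀ a ∈ X T, F a T = cT a) ∧ ∀ t < T, ∀ a ∈ X t, F a t = sInf (bellmanValues X U f c F t a)

def bellmanGap (c : ℕ → α → β → ℝ) (F : α → ℕ → ℝ) (u : ℕ → β) (x : ℕ → α) (k : ℕ) : ℝ :=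
  c k (x k) (u k) + F (x (k + 1)) (k + 1) - F (x k) k

theorem totalCost_eq_add_sum_bellmanGap {u : ℕ → β} {x : ℕ → α} (hxT : F (x T) T = cT (x T)) :
    totalCost T c cT u x = F (x 0) 0 + ∑ k ∈ Finset.range T, bellmanGap c F u x k := by
  have htele := Finset.sum_range_sub (fun k => F (x k) k) T
  simp only [totalCost, bellmanGap, Finset.sum_sub_distrib, Finset.sum_add_distrib] at htele ⊢
  rw [← hxT]
  linarith

theorem feas_iff {x0 : α} {u : ℕ → β} {x : ℕ → α} (hx0 : x0 ∈ X 0) :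
    Feas T f X U x0 u x ↔ x 0 = x0 ∧ (∀ k < T, x (k + 1) = f (x k) (u k) k) ∧
      ∀ k < T, u k ∈ U ∧ f (x k) (u k) k ∈ X (k + 1) := by
  constructor
  · rintro ⟨h0, hX, hdyn⟩
    refine ⟨h0, fun k hk => (hdyn k hk).2, fun k hk => ⟨(hdyn k hk).1, ?_⟩⟩
    exact (hdyn k hk).2 ▸ hX (k + 1) hk
  · rintro ⟨h0, hdyn, hadm⟩
    refine ⟨h0, fun k hk => ?_, fun k hk => ⟨(hadm k hk).1, hdyn k hk⟩⟩
    induction k with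
    | zero => exact h0 ▸ hx0
    | succ k _ => exact hdyn k hk ▸ (hadm k hk).2

theorem add_mem_lowerBounds_bellmanValues {t : ℕ} {a : α} {R B : ℝ}
    (hR : ∀ b ∈ U, R ≤ c t a b) (hB : B ∈ lowerBounds ((F · (t + 1)) '' X (t + 1))) :
    R + B ∈ lowerBounds (bellmanValues X U f c F t a) := by
  rintro _ ⟨b, hb, hfb, rfl⟩
  exact add_le_add (hR b hb) (hB ⟨_, hfb, rfl⟩)

namespace SolvesBellman

theorem bddBelow_image (hF : SolvesBellman T X U f c cT F)
    (hc : ∀ t < T, ∃ R, ∀ a ∈ X t, ∀ b ∈ U, R ≤ c t a b) (hcT : ∃ R, ∀ a ∈ X T, R ≤ cT a)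
    (hGam : ∀ t < T, ∀ a ∈ X t, ∃ b ∈ U, f a b t ∈ X (t + 1)) {t : ℕ} (ht : t ≤ T) :
    BddBelow ((F · t) '' X t) := by
  induction ht using Nat.decreasingInduction with
  | self =>
    obtain ⟨R, hR⟩ := hcT
    exact ⟨R, forall_mem_image.2 fun a ha => (hR a ha).trans (hF.1 a ha).ge⟩
  | of_succ t ht ih =>
    obtain ⟨B, hB⟩ := ih
    obtain ⟨R, hR⟩ := hc t ht
    refine ⟨R + B, forall_mem_image.2 fun a ha => ?_⟩
    obtain ⟨b₀, hb₀, hfb₀⟩ := hGam t ht a ha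
    rw [hF.2 t ht a ha]
    exact le_csInf ⟨_, b₀, hb₀, hfb₀, rfl⟩ (add_mem_lowerBounds_bellmanValues (hR a ha) hB)

theorem le_add (hF : SolvesBellman T X U f c cT F)
    (hc : ∀ t < T, ∃ R, ∀ a ∈ X t, ∀ b ∈ U, R ≤ c t a b) (hcT : ∃ R, ∀ a ∈ X T, R ≤ cT a)
    (hGam : ∀ t < T, ∀ a ∈ X t, ∃ b ∈ U, f a b t ∈ X (t + 1)) {t : ℕ} (ht : t < T)
    {a : α} (ha : a ∈ X t) {b : β} (hb : b ∈ U) (hfb : f a b t ∈ X (t + 1)) :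
    F a t ≤ c t a b + F (f a b t) (t + 1) := by
  obtain ⟨B, hB⟩ := hF.bddBelow_image hc hcT hGam ht
  obtain ⟨R, hR⟩ := hc t ht
  rw [hF.2 t ht a ha]
  exact csInf_le ⟨_, add_mem_lowerBounds_bellmanValues (hR a ha) hB⟩ ⟨b, hb, hfb, rfl⟩

theorem exists_add_lt (hF : SolvesBellman T X U f c cT F)
    (hGam : ∀ t < T, ∀ a ∈ X t, ∃ b ∈ U, f a b t ∈ X (t + 1)) {t : ℕ} (ht : t < T)
    {a : α} (ha : a ∈ X t) {δ : ℝ} (hδ : 0 < δ) :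
    ∃ b ∈ U, f a b t ∈ X (t + 1) ∧ c t a b + F (f a b t) (t + 1) < F a t + δ := by
  obtain ⟨b₀, hb₀, hfb₀⟩ := hGam t ht a ha
  rw [hF.2 t ht a ha]
  obtain ⟨_, ⟨b, hb, hfb, rfl⟩, hlt⟩ := exists_lt_of_csInf_lt (s := bellmanValues X U f c F t a)
    ⟨_, b₀, hb₀, hfb₀, rfl⟩ (lt_add_of_pos_right _ hδ)
  exact ⟨b, hb, hfb, hlt⟩

theorem add_eq_iff_forall_le (hF : SolvesBellman T X U f c cT F)
    (hc : ∀ t < T, ∃ R, ∀ a ∈ X t, ∀ b ∈ U, R ≤ c t a b) (hcT : ∃ R, ∀ a ∈ X T, R ≤ cT a)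
    (hGam : ∀ t < T, ∀ a ∈ X t, ∃ b ∈ U, f a b t ∈ X (t + 1)) {t : ℕ} (ht : t < T)
    {a : α} (ha : a ∈ X t) {b₀ : β} (hb₀ : b₀ ∈ U) (hfb₀ : f a b₀ t ∈ X (t + 1)) :
    c t a b₀ + F (f a b₀ t) (t + 1) = F a t ↔ ∀ b ∈ U, f a b t ∈ X (t + 1) →
      c t a b₀ + F (f a b₀ t) (t + 1) ≤ c t a b + F (f a b t) (t + 1) := by
  refine ⟨fun h b hb hfb => h ▸ hF.le_add hc hcT hGam ht ha hb hfb, fun h => ?_⟩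
  have hleast : IsLeast (bellmanValues X U f c F t a) (c t a b₀ + F (f a b₀ t) (t + 1)) :=
    ⟨⟨b₀, hb₀, hfb₀, rfl⟩, by rintro _ ⟨b, hb, hfb, rfl⟩; exact h b hb hfb⟩
  rw [hF.2 t ht a ha, hleast.csInf_eq]

theorem totalCost_eq (hF : SolvesBellman T X U f c cT F) {x0 : α} {u : ℕ → β} {x : ℕ → α}
    (h : Feas T f X U x0 u x) :
    totalCost T c cT u x = F x0 0 + ∑ k ∈ Finset.range T, bellmanGap c F u x k := by
  rw [totalCost_eq_add_sum_bellmanGap (hF.1 _ (h.2.1 T le_rfl)), h.1]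

theorem bellmanGap_nonneg (hF : SolvesBellman T X U f c cT F)
    (hc : ∀ t < T, ∃ R, ∀ a ∈ X t, ∀ b ∈ U, R ≤ c t a b) (hcT : ∃ R, ∀ a ∈ X T, R ≤ cT a)
    (hGam : ∀ t < T, ∀ a ∈ X t, ∃ b ∈ U, f a b t ∈ X (t + 1)) {x0 : α} {u : ℕ → β}
    {x : ℕ → α} (h : Feas T f X U x0 u x) {k : ℕ} (hk : k < T) :
    0 ≤ bellmanGap c F u x k := by
  obtain ⟨hu, hx⟩ := h.2.2 k hk
  have := hF.le_add hc hcT hGam hk (h.2.1 k hk.le) hu (hx ▸ h.2.1 (k + 1) hk)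
  rw [bellmanGap, hx]
  linarith

theorem bellmanGap_eq_zero_iff (hF : SolvesBellman T X U f c cT F)
    (hc : ∀ t < T, ∃ R, ∀ a ∈ X t, ∀ b ∈ U, R ≤ c t a b) (hcT : ∃ R, ∀ a ∈ X T, R ≤ cT a)
    (hGam : ∀ t < T, ∀ a ∈ X t, ∃ b ∈ U, f a b t ∈ X (t + 1)) {x0 : α} {u : ℕ → β}
    {x : ℕ → α} (h : Feas T f X U x0 u x) {k : ℕ} (hk : k < T) :
    bellmanGap c F u x k = 0 ↔ ∀ b ∈ U, f (x k) b k ∈ X (k + 1) →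
      c k (x k) (u k) + F (f (x k) (u k) k) (k + 1) ≤ c k (x k) b + F (f (x k) b k) (k + 1) := by
  obtain ⟨hu, hx⟩ := h.2.2 k hk
  rw [← hF.add_eq_iff_forall_le hc hcT hGam hk (h.2.1 k hk.le) hu (hx ▸ h.2.1 (k + 1) hk),
    bellmanGap, hx, sub_eq_zero]

theorem exists_feas_sum_bellmanGap_le [Nonempty β] (hF : SolvesBellman T X U f c cT F)
    (hGam : ∀ t < T, ∀ a ∈ X t, ∃ b ∈ U, f a b t ∈ X (t + 1)) {x0 : α} (hx0 : x0 ∈ X 0)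
    {ε : ℝ} (hε : 0 < ε) :
    ∃ u x, Feas T f X U x0 u x ∧ ∑ k ∈ Finset.range T, bellmanGap c F u x k ≤ ε := by
  have hδ : 0 < ε / (T + 1) := by positivity
  choose! σ hσU hσX hσ using fun t (ht : t < T) a (ha : a ∈ X t) => hF.exists_add_lt hGam ht ha hδ
  let x : ℕ → α := fun k => Nat.rec x0 (fun k xk => f xk (σ k xk) k) k
  have hX : ∀ k ≤ T, x k ∈ X k := by
    intro k hk
    induction k with
    | zero => exact hx0
    | succ k ih => exact hσX k (by omega) (x k) (ih (by omega))
  refine ⟨fun k => σ k (x k), x, ⟨rfl, hX, fun k hk => ⟨hσU k hk _ (hX k hk.le), rfl⟩⟩, ?_⟩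
  calc ∑ k ∈ Finset.range T, bellmanGap c F (fun k => σ k (x k)) x k
      ≤ ∑ _k ∈ Finset.range T, ε / (T + 1) := Finset.sum_le_sum fun k hk => by
        have := hσ k (Finset.mem_range.1 hk) (x k) (hX k (Finset.mem_range.1 hk).le)
        rw [bellmanGap]
        linarith
    _ = T * (ε / (T + 1)) := by simp
    _ ≤ ε := by
        rw [mul_div_assoc', div_le_iff₀ (by positivity)]
        linarith

theorem forall_totalCost_le_iff_bellmanGap_eq_zero [Nonempty β]
    (hF : SolvesBellman T X U f c cT F)
    (hc : ∀ t < T, ∃ R, ∀ a ∈ X t, ∀ b ∈ U, R ≤ c t a b) (hcT : ∃ R, ∀ a ∈ X T, R ≤ cT a)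
    (hGam : ∀ t < T, ∀ a ∈ X t, ∃ b ∈ U, f a b t ∈ X (t + 1)) {x0 : α} (hx0 : x0 ∈ X 0)
    {u₀ : ℕ → β} {x₀ : ℕ → α} (h₀ : Feas T f X U x0 u₀ x₀) :
    (∀ u x, Feas T f X U x0 u x → totalCost T c cT u₀ x₀ ≤ totalCost T c cT u x) ↔
      ∀ k < T, bellmanGap c F u₀ x₀ k = 0 := by
  have hgap_nonneg {u x} (h : Feas T f X U x0 u x) :
      ∀ k ∈ Finset.range T, 0 ≤ bellmanGap c F u x k :=
    fun k hk => hF.bellmanGap_nonneg hc hcT hGam h (Finset.mem_range.1 hk)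
  have hsum_eq_zero : (∀ k < T, bellmanGap c F u₀ x₀ k = 0) ↔
      ∑ k ∈ Finset.range T, bellmanGap c F u₀ x₀ k = 0 := by
    simp only [Finset.sum_eq_zero_iff_of_nonneg (hgap_nonneg h₀), Finset.mem_range]
  rw [hsum_eq_zero]
  constructor
  · intro hopt
    refine le_antisymm (le_of_forall_pos_le_add fun ε hε => ?_)
      (Finset.sum_nonneg (hgap_nonneg h₀))
    obtain ⟨u, x, h, hsum⟩ := hF.exists_feas_sum_bellmanGap_le hGam hx0 hε
    have := hopt u x h
    rw [hF.totalCost_eq h₀, hF.totalCost_eq h] at this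
    linarith
  · intro hzero u x h
    rw [hF.totalCost_eq h₀, hF.totalCost_eq h, hzero, add_le_add_iff_left]
    exact Finset.sum_nonneg (hgap_nonneg h)

end SolvesBellman

end Bellman

theorem bellman_equation_necessary_and_sufficient_general
    {n m : ℕ} (T : ℕ)
    (X : ℕ → Set (Fin n → ℝ)) (U : Set (Fin m → ℝ))
    (f : (Fin n → ℝ) → (Fin m → ℝ) → ℕ → (Fin n → ℝ))
    (x0 : Fin n → ℝ) (hx0 : x0 ∈ X 0)
    (c : ℕ → (Fin n → ℝ) → (Fin m → ℝ) → ℝ) (cT : (Fin n → ℝ) → ℝ)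
    (J : (ℕ → Fin m → ℝ) → (ℕ → Fin n → ℝ) → ℝ)
    (hJ : ∀ u x, J u x = (∑ t ∈ Finset.range T, c t (x t) (u t)) + cT (x T))
    (hc : ∀ t, t < T → ∃ R, ∀ a ∈ X t, ∀ b ∈ U, |c t a b| ≤ R)
    (hcT : ∃ R, ∀ a ∈ X T, |cT a| ≤ R)
    (hGam : ∀ t, t < T → ∀ a ∈ X t, ∃ b ∈ U, f a b t ∈ X (t + 1))
    (F : (Fin n → ℝ) → ℕ → ℝ)
    (hFT : ∀ a ∈ X T, F a T = cT a)
    (hF : ∀ t, t < T → ∀ a ∈ X t, F a t =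
      sInf {y : ℝ | ∃ b ∈ U, f a b t ∈ X (t + 1) ∧
        y = c t a b + F (f a b t) (t + 1)})
    (ustar : ℕ → Fin m → ℝ) (xstar : ℕ → Fin n → ℝ) :
    (Feas T f X U x0 ustar xstar ∧
        ∀ u x, Feas T f X U x0 u x → J ustar xstar ≤ J u x) ↔
      (xstar 0 = x0 ∧
        (∀ k, k < T → xstar (k + 1) = f (xstar k) (ustar k) k) ∧
        ∀ k, k < T →
          (ustar k ∈ U ∧ f (xstar k) (ustar k) k ∈ X (k + 1)) ∧
          ∀ b ∈ U, f (xstar k) b k ∈ X (k + 1) →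
            c k (xstar k) (ustar k) + F (f (xstar k) (ustar k) k) (k + 1) ≤
              c k (xstar k) b + F (f (xstar k) b k) (k + 1)) := by
  obtain rfl : J = totalCost T c cT := funext₂ hJ
  have hB : SolvesBellman T X U f c cT F := ⟨hFT, hF⟩
  have hc' : ∀ t < T, ∃ R, ∀ a ∈ X t, ∀ b ∈ U, R ≤ c t a b := fun t ht =>
    let ⟨R, hR⟩ := hc t ht; ⟨-R, fun a ha b hb => neg_le_of_abs_le (hR a ha b hb)⟩
  have hcT' : ∃ R, ∀ a ∈ X T, R ≤ cT a :=
    let ⟨R, hR⟩ := hcT; ⟨-R, fun a ha => neg_le_of_abs_le (hR a ha)⟩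
  constructor
  · rintro ⟨hfeas, hopt⟩
    obtain ⟨h0, hdyn, hadm⟩ := (feas_iff hx0).1 hfeas
    have hgap := (hB.forall_totalCost_le_iff_bellmanGap_eq_zero hc' hcT' hGam hx0 hfeas).1 hopt
    exact ⟨h0, hdyn, fun k hk =>
      ⟨hadm k hk, (hB.bellmanGap_eq_zero_iff hc' hcT' hGam hfeas hk).1 (hgap k hk)⟩⟩
  · rintro ⟨h0, hdyn, hmin⟩
    have hfeas := (feas_iff hx0).2 ⟨h0, hdyn, fun k hk => (hmin k hk).1⟩
    refine ⟨hfeas, (hB.forall_totalCost_le_iff_bellmanGap_eq_zero hc' hcT' hGam hx0 hfeas).2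
      fun k hk => ?_⟩
    exact (hB.bellmanGap_eq_zero_iff hc' hcT' hGam hfeas hk).2 (hmin k hk).2

/-- (Bellman's Equation, optimality part.) For an additively
separable cost with bounded stage costs, nonempty feasible input sets, and `F`
satisfying Bellman's Equation, a pair `(u*, x*)` solves the MSOP initialized at
`x0` (is feasible and minimizes `J` over feasible pairs) if and only if it
starts at `x0`, follows the dynamics, and `u*(k)` minimizes
`u ↦ c_k(x*(k),u) + F(f(x*(k),u,k), k+1)` over `Γ_{x*(k),k}` for every `k < T`. -/
theorem bellman_equation_necessary_and_sufficient
    {n m : ℕ} (T : ℕ) (hT : 1 ≤ T)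
    (X : ℕ → Set (Fin n → ℝ)) (U : Set (Fin m → ℝ))
    (f : (Fin n → ℝ) → (Fin m → ℝ) → ℕ → (Fin n → ℝ))
    (x0 : Fin n → ℝ) (hx0 : x0 ∈ X 0)
    (c : ℕ → (Fin n → ℝ) → (Fin m → ℝ) → ℝ) (cT : (Fin n → ℝ) → ℝ)
    (J : (ℕ → Fin m → ℝ) → (ℕ → Fin n → ℝ) → ℝ)
    (hJ : ∀ u x, J u x = (∑ t ∈ Finset.range T, c t (x t) (u t)) + cT (x T))
    (hc : ∀ t, t < T → ∃ R, ∀ a ∈ X t, ∀ b ∈ U, |c t a b| ≤ R)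
    (hcT : ∃ R, ∀ a ∈ X T, |cT a| ≤ R)
    (hGam : ∀ t, t < T → ∀ a ∈ X t, ∃ b ∈ U, f a b t ∈ X (t + 1))
    (F : (Fin n → ℝ) → ℕ → ℝ)
    (hFT : ∀ a ∈ X T, F a T = cT a)
    (hF : ∀ t, t < T → ∀ a ∈ X t, F a t =
      sInf {y : ℝ | ∃ b ∈ U, f a b t ∈ X (t + 1) ∧
        y = c t a b + F (f a b t) (t + 1)})
    (ustar : ℕ → Fin m → ℝ) (xstar : ℕ → Fin n → ℝ) :
    (Feas T f X U x0 ustar xstar ∧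
        ∀ u x, Feas T f X U x0 u x → J ustar xstar ≤ J u x) ↔
      (xstar 0 = x0 ∧
        (∀ k, k < T → xstar (k + 1) = f (xstar k) (ustar k) k) ∧
        ∀ k, k < T →
          (ustar k ∈ U ∧ f (xstar k) (ustar k) k ∈ X (k + 1)) ∧
          ∀ b ∈ U, f (xstar k) b k ∈ X (k + 1) →
            c k (xstar k) (ustar k) + F (f (xstar k) (ustar k) k) (k + 1) ≤
              c k (xstar k) b + F (f (xstar k) b k) (k + 1)) :=
  bellman_equation_necessary_and_sufficient_general T X U f x0 hx0 c cT J hJ hc hcT hGam F hFT hF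
    ustar xstar
end

section
/- Let I_t ⊆ ℝ^k (t = 0,…,T), c_t : X_t × U × I_t → [0,∞) for t = 0,…,T−1, c_T : X_T × I_T → ℝ, and densities p_t : X_t × U × I_t → [0,∞), p_T : X_T × I_T → [0,∞) with ∫_{I_t} p_t(x,u,w) dw = 1 and ∫_{I_T} p_T(x,w) dw = 1 for all (x,u). Define J(u,x) = ∫_{I_0 × ⋯ × I_T} c_T(x(T),w(T)) Π_{t=0}^{T−1} c_t(x(t),u(t),w(t)) · p_T(x(T),w(T)) Π_{t=0}^{T−1} p_t(x(t),u(t),w(t)) dw(0)⋯dw(T). Then J is monotonically backward separable, realized by the representation maps φ_T(x) = ∫_{I_T} c_T(x,w) p_T(x,w) dw and φ_i(x,u,z) = z · ∫_{I_i} p_i(x,u,w) c_i(x,u,w) dw for i = 0,…,T−1. If moreover all c_t and p_t are bounded and each I_t has finite Lebesgue measure, then J is naturally monotonically backward separable; and if ∫_{I_i} p_i(x,u,w) c_i(x,u,w) dw ≠ 0 for all (x,u) ∈ X_i × U and all i ∈ {0,…,T−1}, the representation maps are strictly monotonic in their third argument. -/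
open Set Filter MeasureTheory

/-! By Fubini on the box `∏ₜ I t`, the integrand being a product of functions of the single
coordinates `w t`, the cost factors as `J(u,x) = φ_T(x T) · ∏_{t<T} C_t(x t, u t)` with
`C_t(x,u) = ∫_{I_t} p_t c_t ≥ 0`. Hence every representation map `z ↦ z · C_t` is linear with
nonnegative slope: monotone, continuous, and strictly monotone when `C_t ≠ 0`. Bounds on `c_t, p_t`
and `vol(I_t) < ∞` bound each `C_t` and `φ_T`, hence every image of the backward composition. -/

section SetIntegral

variable {E : Type*} [MeasurableSpace E] {μ : Measure E} {s : Set E} {f : E → ℝ}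

/-- `s` need not be measurable, so `∀ᵐ x ∂μ.restrict s, x ∈ s` may fail; positivity is passed
through the measurable modification `hf.mk f` instead. -/
theorem ae_restrict_nonneg_of_forall_mem (hf : AEStronglyMeasurable f (μ.restrict s))
    (h : ∀ x ∈ s, 0 ≤ f x) : ∀ᵐ x ∂μ.restrict s, 0 ≤ f x := by
  have hsub : {x | ¬0 ≤ hf.mk f x} ∩ s ⊆ {x | ¬f x = hf.mk f x} ∩ s :=
    fun x ⟨hgx, hx⟩ => ⟨fun hfx => hgx (hfx ▸ h x hx), hx⟩
  have hmk_nonneg : ∀ᵐ x ∂μ.restrict s, 0 ≤ hf.mk f x := by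
    refine ae_iff.2 (le_antisymm ?_ zero_le)
    calc μ.restrict s {x | ¬0 ≤ hf.mk f x}
        = μ ({x | ¬0 ≤ hf.mk f x} ∩ s) :=
          Measure.restrict_apply
            (measurableSet_le measurable_const hf.stronglyMeasurable_mk.measurable).compl
      _ ≤ μ ({x | ¬f x = hf.mk f x} ∩ s) := measure_mono hsub
      _ ≤ μ.restrict s {x | ¬f x = hf.mk f x} := Measure.le_restrict_apply _ _
      _ = 0 := ae_iff.1 hf.ae_eq_mk
  filter_upwards [hmk_nonneg, hf.ae_eq_mk] with x hx hfx
  rwa [hfx]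

theorem setIntegral_nonneg_of_forall_mem (h : ∀ x ∈ s, 0 ≤ f x) : 0 ≤ ∫ x in s, f x ∂μ := by
  by_cases hf : AEStronglyMeasurable f (μ.restrict s)
  · exact setIntegral_nonneg_of_ae_restrict (ae_restrict_nonneg_of_forall_mem hf h)
  · rw [integral_non_aestronglyMeasurable hf]

theorem abs_setIntegral_mul_le {g : E → ℝ} {A B : ℝ} (hs : μ s < ⊤)
    (hf : ∀ x ∈ s, |f x| ≤ A) (hg : ∀ x ∈ s, |g x| ≤ B) :
    |∫ x in s, f x * g x ∂μ| ≤ A * B * μ.real s :=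
  norm_setIntegral_le_of_norm_le_const (C := A * B) hs fun x hx => by
    rw [Real.norm_eq_abs, abs_mul]
    exact mul_le_mul (hf x hx) (hg x hx) (abs_nonneg _) ((abs_nonneg _).trans (hf x hx))

end SetIntegral

theorem setIntegral_univ_pi_prod {ι 𝕜 : Type*} [Fintype ι] [RCLike 𝕜] {E : ι → Type*}
    [∀ i, MeasurableSpace (E i)] (μ : ∀ i, Measure (E i)) [∀ i, SigmaFinite (μ i)]
    (s : ∀ i, Set (E i)) (f : ∀ i, E i → 𝕜) :
    ∫ x in univ.pi s, ∏ i, f i (x i) ∂Measure.pi μ = ∏ i, ∫ x in s i, f i x ∂μ i := by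
  rw [Measure.restrict_pi_pi, integral_fintype_prod_eq_prod]

theorem setIntegral_univ_pi_last_mul_prod_range {E : Type*} [MeasureSpace E]
    [SigmaFinite (volume : Measure E)] (T : ℕ) (I : ℕ → Set E) (gT : E → ℝ)
    (g : ℕ → E → ℝ) :
    ∫ w in univ.pi (fun t : Fin (T + 1) => I t),
        gT (w (Fin.last T)) * ∏ t ∈ Finset.range T, g t (w (Fin.ofNat (T + 1) t)) =
      (∫ w in I T, gT w) * ∏ t ∈ Finset.range T, ∫ w in I t, g t w := by
  let F : (t : Fin (T + 1)) → E → ℝ := Fin.lastCases gT fun t => g t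
  have hF : ∀ w : Fin (T + 1) → E,
      gT (w (Fin.last T)) * ∏ t ∈ Finset.range T, g t (w (Fin.ofNat (T + 1) t)) =
        ∏ t, F t (w t) := by
    intro w
    rw [Fin.prod_univ_castSucc, ← Fin.prod_univ_eq_prod_range, mul_comm]
    simp [F]
  simp_rw [hF, volume_pi, setIntegral_univ_pi_prod, Fin.prod_univ_castSucc,
    ← Fin.prod_univ_eq_prod_range]
  simp [F, mul_comm]

section MultiplicativeRep

variable {α β : Type*} {T : ℕ} {X : ℕ → Set α} {U : Set β} (C : ℕ → α → β → ℝ) (φT : α → ℝ)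

theorem nest_mul (u : ℕ → β) (x : ℕ → α) (t k : ℕ) :
    nest (fun i a b z => z * C i a b) φT u x t k =
      φT (x (t + k)) * ∏ j ∈ Finset.range k, C (t + j) (x (t + j)) (u (t + j)) := by
  induction k generalizing t with
  | zero => simp [nest]
  | succ k ih =>
    simp only [nest, ih, Finset.prod_range_succ', add_zero]
    simp only [← add_assoc, add_right_comm t 1]
    ring

theorem isRep_mul {J : (ℕ → β) → (ℕ → α) → ℝ}
    (hJ : ∀ u x, J u x = φT (x T) * ∏ t ∈ Finset.range T, C t (x t) (u t)) :
    IsRep T X U J (fun i a b z => z * C i a b) φT := by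
  intro u x _ _
  simp [hJ, nest_mul]

theorem monoRep_mul (hC : ∀ t < T, ∀ a ∈ X t, ∀ b ∈ U, 0 ≤ C t a b) :
    MonoRep T X U (fun i a b z => z * C i a b) φT :=
  fun t ht a ha b hb _ _ _ _ hwz => mul_le_mul_of_nonneg_right hwz (hC t ht a ha b hb)

theorem strictMonoRep_mul (hC : ∀ t < T, ∀ a ∈ X t, ∀ b ∈ U, 0 < C t a b) :
    StrictMonoRep T X U (fun i a b z => z * C i a b) φT :=
  fun t ht a ha b hb _ _ _ _ hwz => mul_lt_mul_of_pos_right hwz (hC t ht a ha b hb)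

theorem uscRep_mul : USCRep T X U (fun i a b z => z * C i a b) φT :=
  fun t _ a _ b _ _ _ _ _ hL => hL.mul_const (C t a b)

theorem exists_abs_le_of_mem_imSet_mul (t j : ℕ) (hφT : ∃ B, ∀ a ∈ X (t + j), |φT a| ≤ B)
    (hC : ∀ i, t ≤ i → i < t + j → ∃ M, ∀ a ∈ X i, ∀ b ∈ U, |C i a b| ≤ M) :
    ∃ R, ∀ z ∈ imSet (fun i a b z => z * C i a b) φT X U t j, |z| ≤ R := by
  induction j generalizing t with
  | zero =>
    obtain ⟨B, hB⟩ := hφT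
    exact ⟨B, by rintro z ⟨a, ha, rfl⟩; exact hB a ha⟩
  | succ j ih =>
    obtain ⟨R, hR⟩ := ih (t + 1) (by rwa [add_right_comm, add_assoc])
      fun i _ _ => hC i (by omega) (by omega)
    obtain ⟨M, hM⟩ := hC t le_rfl (by omega)
    refine ⟨|R| * |M|, ?_⟩
    rintro z ⟨a, ha, b, hb, w, hw, rfl⟩
    rw [abs_mul]
    exact mul_le_mul ((hR w hw).trans (le_abs_self R)) ((hM a ha b hb).trans (le_abs_self M))
      (abs_nonneg _) (abs_nonneg _)

theorem bddRep_mul (hφT : ∃ B, ∀ a ∈ X T, |φT a| ≤ B)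
    (hC : ∀ t < T, ∃ M, ∀ a ∈ X t, ∀ b ∈ U, |C t a b| ≤ M) :
    BddRep T X U (fun i a b z => z * C i a b) φT := by
  intro t ht
  obtain ⟨R, hR⟩ := exists_abs_le_of_mem_imSet_mul C φT t (T - t)
    (by rwa [Nat.add_sub_cancel' ht]) fun i _ hi => hC i (by omega)
  exact ⟨|R| + 1, by positivity, fun z hz => (hR z hz).trans_lt (by linarith [le_abs_self R])⟩

end MultiplicativeRep

theorem multiplicative_is_backward_separable_general
    {n m k : ℕ} (T : ℕ)
    (X : ℕ → Set (Fin n → ℝ)) (U : Set (Fin m → ℝ))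
    (I : ℕ → Set (Fin k → ℝ))
    (c : ℕ → (Fin n → ℝ) → (Fin m → ℝ) → (Fin k → ℝ) → ℝ)
    (cT : (Fin n → ℝ) → (Fin k → ℝ) → ℝ)
    (p : ℕ → (Fin n → ℝ) → (Fin m → ℝ) → (Fin k → ℝ) → ℝ)
    (pT : (Fin n → ℝ) → (Fin k → ℝ) → ℝ)
    (hc : ∀ t, t < T → ∀ a ∈ X t, ∀ b ∈ U, ∀ w ∈ I t, 0 ≤ c t a b w)
    (hp : ∀ t, t < T → ∀ a ∈ X t, ∀ b ∈ U, ∀ w ∈ I t, 0 ≤ p t a b w)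
    (J : (ℕ → Fin m → ℝ) → (ℕ → Fin n → ℝ) → ℝ)
    (hJ : ∀ u x, J u x =
      ∫ w in Set.univ.pi (fun t : Fin (T + 1) => I (t : ℕ)),
        (cT (x T) (w (Fin.last T)) * ∏ t ∈ Finset.range T, c t (x t) (u t) (w (Fin.ofNat (T + 1) t))) *
          (pT (x T) (w (Fin.last T)) * ∏ t ∈ Finset.range T, p t (x t) (u t) (w (Fin.ofNat (T + 1) t)))) :
    (IsRep T X U J
        (fun i a b z => z * ∫ w in I i, p i a b w * c i a b w)
        (fun a => ∫ w in I T, cT a w * pT a w) ∧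
      MonoRep T X U
        (fun i a b z => z * ∫ w in I i, p i a b w * c i a b w)
        (fun a => ∫ w in I T, cT a w * pT a w)) ∧
    ((∀ t, t < T → ∃ R, ∀ a ∈ X t, ∀ b ∈ U, ∀ w ∈ I t, |c t a b w| ≤ R) →
      (∃ R, ∀ a ∈ X T, ∀ w ∈ I T, |cT a w| ≤ R) →
      (∀ t, t < T → ∃ R, ∀ a ∈ X t, ∀ b ∈ U, ∀ w ∈ I t, |p t a b w| ≤ R) →
      (∃ R, ∀ a ∈ X T, ∀ w ∈ I T, |pT a w| ≤ R) →
      (∀ t, t ≤ T → volume (I t) < ⊤) →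
        USCRep T X U
          (fun i a b z => z * ∫ w in I i, p i a b w * c i a b w)
          (fun a => ∫ w in I T, cT a w * pT a w) ∧
        BddRep T X U
          (fun i a b z => z * ∫ w in I i, p i a b w * c i a b w)
          (fun a => ∫ w in I T, cT a w * pT a w)) ∧
    ((∀ i, i < T → ∀ a ∈ X i, ∀ b ∈ U, (∫ w in I i, p i a b w * c i a b w) ≠ 0) →
      StrictMonoRep T X U
        (fun i a b z => z * ∫ w in I i, p i a b w * c i a b w)
        (fun a => ∫ w in I T, cT a w * pT a w)) := by
  set C : ℕ → (Fin n → ℝ) → (Fin m → ℝ) → ℝ := fun i a b => ∫ w in I i, p i a b w * c i a b w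
  set φT : (Fin n → ℝ) → ℝ := fun a => ∫ w in I T, cT a w * pT a w
  have hC_nonneg : ∀ t < T, ∀ a ∈ X t, ∀ b ∈ U, 0 ≤ C t a b := fun t ht a ha b hb =>
    setIntegral_nonneg_of_forall_mem fun w hw =>
      mul_nonneg (hp t ht a ha b hb w hw) (hc t ht a ha b hb w hw)
  have hJ_factor : ∀ u x, J u x = φT (x T) * ∏ t ∈ Finset.range T, C t (x t) (u t) := by
    intro u x
    rw [hJ]
    convert setIntegral_univ_pi_last_mul_prod_range T I (fun v => cT (x T) v * pT (x T) v)
      (fun t v => p t (x t) (u t) v * c t (x t) (u t) v) using 3 with w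
    rw [Finset.prod_mul_distrib]
    ring
  refine ⟨⟨isRep_mul C φT hJ_factor, monoRep_mul C φT hC_nonneg⟩, ?_, ?_⟩
  · intro hc_bdd hcT_bdd hp_bdd hpT_bdd hvol
    refine ⟨uscRep_mul C φT, bddRep_mul C φT ?_ ?_⟩
    · obtain ⟨Rc, hRc⟩ := hcT_bdd
      obtain ⟨Rp, hRp⟩ := hpT_bdd
      exact ⟨Rc * Rp * volume.real (I T), fun a ha =>
        abs_setIntegral_mul_le (hvol T le_rfl) (hRc a ha) (hRp a ha)⟩
    · intro t ht
      obtain ⟨Rc, hRc⟩ := hc_bdd t ht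
      obtain ⟨Rp, hRp⟩ := hp_bdd t ht
      exact ⟨Rp * Rc * volume.real (I t), fun a ha b hb =>
        abs_setIntegral_mul_le (hvol t ht.le) (hRp a ha b hb) (hRc a ha b hb)⟩
  · exact fun hne => strictMonoRep_mul C φT fun t ht a ha b hb =>
      (hC_nonneg t ht a ha b hb).lt_of_ne (hne t ht a ha b hb).symm

/-- The multiplicative (expected product) cost
`J(u,x) = ∫_{I_0 × ⋯ × I_T} c_T(x T, w T) Π_{t<T} c_t(x t, u t, w t) ·
p_T(x T, w T) Π_{t<T} p_t(x t, u t, w t) dw` (with nonnegative `c_t`, and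
densities `p_t` integrating to one) is monotonically backward separable,
realized by `φ_T(x) = ∫_{I_T} c_T(x,w) p_T(x,w) dw` and
`φ_i(x,u,z) = z ∫_{I_i} p_i(x,u,w) c_i(x,u,w) dw`. If moreover all `c_t, p_t`
are bounded and each `I_t` has finite measure, `J` is naturally monotonically
backward separable; and if `∫_{I_i} p_i c_i dw ≠ 0` on `X_i × U` the
representation maps are strictly monotonic. -/
theorem multiplicative_is_backward_separable
    {n m k : ℕ} (T : ℕ) (hT : 1 ≤ T)
    (X : ℕ → Set (Fin n → ℝ)) (U : Set (Fin m → ℝ))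
    (I : ℕ → Set (Fin k → ℝ))
    (c : ℕ → (Fin n → ℝ) → (Fin m → ℝ) → (Fin k → ℝ) → ℝ)
    (cT : (Fin n → ℝ) → (Fin k → ℝ) → ℝ)
    (p : ℕ → (Fin n → ℝ) → (Fin m → ℝ) → (Fin k → ℝ) → ℝ)
    (pT : (Fin n → ℝ) → (Fin k → ℝ) → ℝ)
    (hc : ∀ t, t < T → ∀ a ∈ X t, ∀ b ∈ U, ∀ w ∈ I t, 0 ≤ c t a b w)
    (hp : ∀ t, t < T → ∀ a ∈ X t, ∀ b ∈ U, ∀ w ∈ I t, 0 ≤ p t a b w)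
    (hpT : ∀ a ∈ X T, ∀ w ∈ I T, 0 ≤ pT a w)
    (hp1 : ∀ t, t < T → ∀ a ∈ X t, ∀ b ∈ U, (∫ w in I t, p t a b w) = 1)
    (hpT1 : ∀ a ∈ X T, (∫ w in I T, pT a w) = 1)
    (J : (ℕ → Fin m → ℝ) → (ℕ → Fin n → ℝ) → ℝ)
    (hJ : ∀ u x, J u x =
      ∫ w in Set.univ.pi (fun t : Fin (T + 1) => I (t : ℕ)),
        (cT (x T) (w (Fin.last T)) * ∏ t ∈ Finset.range T, c t (x t) (u t) (w (Fin.ofNat (T + 1) t))) *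
          (pT (x T) (w (Fin.last T)) * ∏ t ∈ Finset.range T, p t (x t) (u t) (w (Fin.ofNat (T + 1) t)))) :
    (IsRep T X U J
        (fun i a b z => z * ∫ w in I i, p i a b w * c i a b w)
        (fun a => ∫ w in I T, cT a w * pT a w) ∧
      MonoRep T X U
        (fun i a b z => z * ∫ w in I i, p i a b w * c i a b w)
        (fun a => ∫ w in I T, cT a w * pT a w)) ∧
    ((∀ t, t < T → ∃ R, ∀ a ∈ X t, ∀ b ∈ U, ∀ w ∈ I t, |c t a b w| ≤ R) →
      (∃ R, ∀ a ∈ X T, ∀ w ∈ I T, |cT a w| ≤ R) →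
      (∀ t, t < T → ∃ R, ∀ a ∈ X t, ∀ b ∈ U, ∀ w ∈ I t, |p t a b w| ≤ R) →
      (∃ R, ∀ a ∈ X T, ∀ w ∈ I T, |pT a w| ≤ R) →
      (∀ t, t ≤ T → volume (I t) < ⊤) →
        USCRep T X U
          (fun i a b z => z * ∫ w in I i, p i a b w * c i a b w)
          (fun a => ∫ w in I T, cT a w * pT a w) ∧
        BddRep T X U
          (fun i a b z => z * ∫ w in I i, p i a b w * c i a b w)
          (fun a => ∫ w in I T, cT a w * pT a w)) ∧
    ((∀ i, i < T → ∀ a ∈ X i, ∀ b ∈ U, (∫ w in I i, p i a b w * c i a b w) ≠ 0) →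
      StrictMonoRep T X U
        (fun i a b z => z * ∫ w in I i, p i a b w * c i a b w)
        (fun a => ∫ w in I T, cT a w * pT a w)) :=
  multiplicative_is_backward_separable_general T X U I c cT p pT hc hp J hJ
end

section
/- Let p_k : X_k × U → [0,1] (k = 0,…,T−1) and p_T : X_T → [0,1] satisfy, for all (u,x), Σ_{t=0}^{T−1} p_t(x(t),u(t)) Π_{i=0}^{t−1}(1−p_i(x(i),u(i))) + p_T(x(T)) Π_{i=0}^{T−1}(1−p_i(x(i),u(i))) = 1, and let c_k : X_k × U → ℝ, c_T : X_T → ℝ. Define the stochastically stopped additive cost J(u,x) = Σ_{t=0}^{T−1} ( Σ_{s=0}^{t} c_s(x(s),u(s)) ) p_t(x(t),u(t)) Π_{i=0}^{t−1}(1−p_i(x(i),u(i))) + ( Σ_{t=0}^{T−1} c_t(x(t),u(t)) + c_T(x(T)) ) p_T(x(T)) Π_{i=0}^{T−1}(1−p_i(x(i),u(i))). Then J is monotonically backward separable, realized by the representation maps φ_i(x,u,z) = c_i(x,u) + z(1 − p_i(x,u)) for i = 0,…,T−1 and φ_T(x) = c_T(x) p_T(x). If all c_t are bounded, J is naturally monotonically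 backward separable; and if p_i(x,u) ≠ 1 for all (x,u) ∈ X_i × U and all i ∈ {0,…,T−1}, the representation maps are strictly monotonic in their third argument. -/
open Set Filter MeasureTheory

/-!
Unrolling the affine maps `φ_i(x,u,z) = c_i + z (1 - p_i)` gives the survival-weighted cost
`∑_s c_s S_s + c_T p_T S_T`, where `S_t = ∏_{i<t} (1 - p_i)` is the probability of not having
stopped before time `t`. Since `p_t S_t = S_t - S_{t+1}`, the law of total probability telescopes to
`p_T S_T = S_T`, and Abel summation turns the stopped cost `J` into the same expression.
Monotonicity, strict monotonicity and continuity hold because each map is affine in `z` with slope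
`1 - p_i ∈ [0, 1]`; this slope bound also propagates bounds backward through the images.
-/

open Finset

theorem sum_partialSum_mul_sub_add (c S : ℕ → ℝ) (T : ℕ) :
    ∑ t ∈ range T, (∑ s ∈ range (t + 1), c s) * (S t - S (t + 1)) +
        (∑ t ∈ range T, c t) * S T = ∑ t ∈ range T, c t * S t := by
  induction T with
  | zero => simp
  | succ T ih =>
    rw [sum_range_succ, sum_range_succ c, sum_range_succ (fun t => c t * S t), ← ih]
    ring

theorem stoppedCost_eq_survivalCost (c q : ℕ → ℝ) (cT pT : ℝ) (T : ℕ)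
    (hlaw : ∑ t ∈ range T, q t * ∏ i ∈ range t, (1 - q i) +
      pT * ∏ i ∈ range T, (1 - q i) = 1) :
    ∑ t ∈ range T, (∑ s ∈ range (t + 1), c s) * (q t * ∏ i ∈ range t, (1 - q i)) +
        (∑ t ∈ range T, c t + cT) * (pT * ∏ i ∈ range T, (1 - q i)) =
      ∑ t ∈ range T, c t * ∏ i ∈ range t, (1 - q i) + cT * pT * ∏ i ∈ range T, (1 - q i) := by
  have hstop : ∀ t, q t * ∏ i ∈ range t, (1 - q i) =
      ∏ i ∈ range t, (1 - q i) - ∏ i ∈ range (t + 1), (1 - q i) := fun t => by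
    rw [prod_range_succ]; ring
  have hterminal : pT * ∏ i ∈ range T, (1 - q i) = ∏ i ∈ range T, (1 - q i) := by
    simp only [hstop, sum_range_sub' (fun t => ∏ i ∈ range t, (1 - q i)), prod_range_zero] at hlaw
    linarith
  simp only [hstop]
  rw [add_mul, mul_assoc cT, hterminal, ← add_assoc,
    sum_partialSum_mul_sub_add c (fun t => ∏ i ∈ range t, (1 - q i))]

section AffineRep

variable {α β : Type*} {g s : ℕ → α → β → ℝ} {φT : α → ℝ} {T : ℕ} {X : ℕ → Set α} {U : Set β}

theorem nest_affine (u : ℕ → β) (x : ℕ → α) (k t : ℕ) :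
    nest (fun i a b z => g i a b + z * s i a b) φT u x t k =
      ∑ j ∈ range k, g (t + j) (x (t + j)) (u (t + j)) *
          ∏ l ∈ range j, s (t + l) (x (t + l)) (u (t + l)) +
        φT (x (t + k)) * ∏ l ∈ range k, s (t + l) (x (t + l)) (u (t + l)) := by
  induction k generalizing t with
  | zero => simp [nest]
  | succ k ih =>
    rw [nest, ih, sum_range_succ', prod_range_succ']
    simp only [prod_range_succ', prod_range_zero, add_zero, mul_one, ← mul_assoc, ← add_assoc,
      add_right_comm t _ 1, ← sum_mul]
    ring

theorem monoRep_affine (hs : ∀ t < T, ∀ a ∈ X t, ∀ b ∈ U, 0 ≤ s t a b) :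
    MonoRep T X U (fun i a b z => g i a b + z * s i a b) φT :=
  fun t ht a ha b hb _ _ _ _ hwz =>
    add_le_add_right (mul_le_mul_of_nonneg_right hwz (hs t ht a ha b hb)) _

theorem strictMonoRep_affine (hs : ∀ t < T, ∀ a ∈ X t, ∀ b ∈ U, 0 < s t a b) :
    StrictMonoRep T X U (fun i a b z => g i a b + z * s i a b) φT :=
  fun t ht a ha b hb _ _ _ _ hwz =>
    add_lt_add_right (mul_lt_mul_of_pos_right hwz (hs t ht a ha b hb)) _

theorem uscRep_affine : USCRep T X U (fun i a b z => g i a b + z * s i a b) φT :=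
  fun _ _ _ _ _ _ _ _ _ _ hL => tendsto_const_nhds.add (hL.mul_const _)

theorem exists_bound_imSet {φ : ℕ → α → β → ℝ → ℝ} (k t : ℕ)
    (hT : ∃ R, ∀ a ∈ X (t + k), |φT a| ≤ R)
    (hφ : ∀ j, t ≤ j → j < t + k → ∀ R, ∃ R', ∀ a ∈ X j, ∀ b ∈ U, ∀ w, |w| ≤ R →
      |φ j a b w| ≤ R') :
    ∃ R, ∀ z ∈ imSet φ φT X U t k, |z| ≤ R := by
  induction k generalizing t with
  | zero =>
    obtain ⟨R, hR⟩ := hT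
    exact ⟨R, by rintro _ ⟨a, ha, rfl⟩; exact hR a ha⟩
  | succ k ih =>
    obtain ⟨R, hR⟩ := ih (t + 1) (by rwa [add_right_comm, add_assoc])
      fun j hj hjk => hφ j (by omega) (by omega)
    obtain ⟨R', hR'⟩ := hφ t le_rfl (by omega) R
    exact ⟨R', by rintro _ ⟨a, ha, b, hb, w, hw, rfl⟩; exact hR' a ha b hb w (hR w hw)⟩

theorem bddRep_of_exists_bound {φ : ℕ → α → β → ℝ → ℝ}
    (h : ∀ t ≤ T, ∃ R, ∀ z ∈ imSet φ φT X U t (T - t), |z| ≤ R) :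
    BddRep T X U φ φT := fun t ht => by
  obtain ⟨R, hR⟩ := h t ht
  exact ⟨max R 0 + 1, by positivity, fun z hz => by linarith [hR z hz, le_max_left R 0]⟩

theorem bddRep_affine (hs : ∀ t < T, ∀ a ∈ X t, ∀ b ∈ U, |s t a b| ≤ 1)
    (hg : ∀ t < T, ∃ R, ∀ a ∈ X t, ∀ b ∈ U, |g t a b| ≤ R)
    (hT : ∃ R, ∀ a ∈ X T, |φT a| ≤ R) :
    BddRep T X U (fun i a b z => g i a b + z * s i a b) φT := by
  refine bddRep_of_exists_bound fun t ht =>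
    exists_bound_imSet _ _ (by rwa [Nat.add_sub_cancel' ht]) fun j _ hj R => ?_
  obtain ⟨Rg, hRg⟩ := hg j (by omega)
  refine ⟨Rg + R, fun a ha b hb w hw => ?_⟩
  calc |g j a b + w * s j a b| ≤ |g j a b| + |w| * |s j a b| := by
        rw [← abs_mul]; exact abs_add_le _ _
    _ ≤ Rg + R * 1 := by
        gcongr
        exacts [hRg a ha b hb, (abs_nonneg w).trans hw, hs j (by omega) a ha b hb]
    _ = Rg + R := by rw [mul_one]

end AffineRep

theorem stopped_additive_is_backward_separable_general
    {n m : ℕ} (T : ℕ)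
    (X : ℕ → Set (Fin n → ℝ)) (U : Set (Fin m → ℝ))
    (c : ℕ → (Fin n → ℝ) → (Fin m → ℝ) → ℝ) (cT : (Fin n → ℝ) → ℝ)
    (p : ℕ → (Fin n → ℝ) → (Fin m → ℝ) → ℝ) (pT : (Fin n → ℝ) → ℝ)
    (hp : ∀ t, t < T → ∀ a ∈ X t, ∀ b ∈ U, p t a b ∈ Set.Icc (0 : ℝ) 1)
    (hpT : ∀ a ∈ X T, pT a ∈ Set.Icc (0 : ℝ) 1)
    (hlaw : ∀ (u : ℕ → Fin m → ℝ) (x : ℕ → Fin n → ℝ),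
      (∀ t, t < T → u t ∈ U) → (∀ t, t ≤ T → x t ∈ X t) →
      (∑ t ∈ Finset.range T, p t (x t) (u t) *
          ∏ i ∈ Finset.range t, (1 - p i (x i) (u i))) +
        pT (x T) * ∏ i ∈ Finset.range T, (1 - p i (x i) (u i)) = 1)
    (J : (ℕ → Fin m → ℝ) → (ℕ → Fin n → ℝ) → ℝ)
    (hJ : ∀ u x, J u x =
      (∑ t ∈ Finset.range T, (∑ s ∈ Finset.range (t + 1), c s (x s) (u s)) *
          (p t (x t) (u t) * ∏ i ∈ Finset.range t, (1 - p i (x i) (u i)))) +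
        ((∑ t ∈ Finset.range T, c t (x t) (u t)) + cT (x T)) *
          (pT (x T) * ∏ i ∈ Finset.range T, (1 - p i (x i) (u i)))) :
    (IsRep T X U J (fun i a b z => c i a b + z * (1 - p i a b))
        (fun a => cT a * pT a) ∧
      MonoRep T X U (fun i a b z => c i a b + z * (1 - p i a b))
        (fun a => cT a * pT a)) ∧
    ((∀ t, t < T → ∃ R, ∀ a ∈ X t, ∀ b ∈ U, |c t a b| ≤ R) →
      (∃ R, ∀ a ∈ X T, |cT a| ≤ R) →
        USCRep T X U (fun i a b z => c i a b + z * (1 - p i a b))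
          (fun a => cT a * pT a) ∧
        BddRep T X U (fun i a b z => c i a b + z * (1 - p i a b))
          (fun a => cT a * pT a)) ∧
    ((∀ i, i < T → ∀ a ∈ X i, ∀ b ∈ U, p i a b ≠ 1) →
      StrictMonoRep T X U (fun i a b z => c i a b + z * (1 - p i a b))
        (fun a => cT a * pT a)) := by
  have hslope : ∀ t < T, ∀ a ∈ X t, ∀ b ∈ U, 0 ≤ 1 - p t a b := fun t ht a ha b hb =>
    sub_nonneg.2 (hp t ht a ha b hb).2
  refine ⟨⟨fun u x hu hx => ?_, monoRep_affine hslope⟩,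
    fun hc hcT => ⟨uscRep_affine, bddRep_affine (fun t ht a ha b hb => ?_) hc ?_⟩,
    fun hne => strictMonoRep_affine fun t ht a ha b hb =>
      sub_pos.2 ((hp t ht a ha b hb).2.lt_of_ne (hne t ht a ha b hb))⟩
  · rw [hJ, nest_affine, stoppedCost_eq_survivalCost _ _ _ _ _ (hlaw u x hu hx)]
    simp only [zero_add]
  · rw [abs_of_nonneg (hslope t ht a ha b hb)]
    linarith [(hp t ht a ha b hb).1]
  · obtain ⟨R, hR⟩ := hcT
    refine ⟨R, fun a ha => ?_⟩
    rw [abs_mul, abs_of_nonneg (hpT a ha).1]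
    exact (mul_le_of_le_one_right (abs_nonneg _) (hpT a ha).2).trans (hR a ha)

/-- The stochastically stopped additive cost (with per-stage
stopping probabilities `p_t ∈ [0,1]` satisfying the law-of-total-probability
constraint) is monotonically backward separable, realized by the representation
maps `φ_i(x,u,z) = c_i(x,u) + z (1 - p_i(x,u))` and `φ_T(x) = c_T(x) p_T(x)`.
If all `c_t` are bounded, it is naturally monotonically backward separable;
and if `p_i(x,u) ≠ 1` on `X_i × U`, the representation maps are strictly
monotonic in their third argument. -/
theorem stopped_additive_is_backward_separable
    {n m : ℕ} (T : ℕ) (hT : 1 ≤ T)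
    (X : ℕ → Set (Fin n → ℝ)) (U : Set (Fin m → ℝ))
    (c : ℕ → (Fin n → ℝ) → (Fin m → ℝ) → ℝ) (cT : (Fin n → ℝ) → ℝ)
    (p : ℕ → (Fin n → ℝ) → (Fin m → ℝ) → ℝ) (pT : (Fin n → ℝ) → ℝ)
    (hp : ∀ t, t < T → ∀ a ∈ X t, ∀ b ∈ U, p t a b ∈ Set.Icc (0 : ℝ) 1)
    (hpT : ∀ a ∈ X T, pT a ∈ Set.Icc (0 : ℝ) 1)
    (hlaw : ∀ (u : ℕ → Fin m → ℝ) (x : ℕ → Fin n → ℝ),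
      (∀ t, t < T → u t ∈ U) → (∀ t, t ≤ T → x t ∈ X t) →
      (∑ t ∈ Finset.range T, p t (x t) (u t) *
          ∏ i ∈ Finset.range t, (1 - p i (x i) (u i))) +
        pT (x T) * ∏ i ∈ Finset.range T, (1 - p i (x i) (u i)) = 1)
    (J : (ℕ → Fin m → ℝ) → (ℕ → Fin n → ℝ) → ℝ)
    (hJ : ∀ u x, J u x =
      (∑ t ∈ Finset.range T, (∑ s ∈ Finset.range (t + 1), c s (x s) (u s)) *
          (p t (x t) (u t) * ∏ i ∈ Finset.range t, (1 - p i (x i) (u i)))) +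
        ((∑ t ∈ Finset.range T, c t (x t) (u t)) + cT (x T)) *
          (pT (x T) * ∏ i ∈ Finset.range T, (1 - p i (x i) (u i)))) :
    (IsRep T X U J (fun i a b z => c i a b + z * (1 - p i a b))
        (fun a => cT a * pT a) ∧
      MonoRep T X U (fun i a b z => c i a b + z * (1 - p i a b))
        (fun a => cT a * pT a)) ∧
    ((∀ t, t < T → ∃ R, ∀ a ∈ X t, ∀ b ∈ U, |c t a b| ≤ R) →
      (∃ R, ∀ a ∈ X T, |cT a| ≤ R) →
        USCRep T X U (fun i a b z => c i a b + z * (1 - p i a b))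
          (fun a => cT a * pT a) ∧
        BddRep T X U (fun i a b z => c i a b + z * (1 - p i a b))
          (fun a => cT a * pT a)) ∧
    ((∀ i, i < T → ∀ a ∈ X i, ∀ b ∈ U, p i a b ≠ 1) →
      StrictMonoRep T X U (fun i a b z => c i a b + z * (1 - p i a b))
        (fun a => cT a * pT a)) :=
  stopped_additive_is_backward_separable_general T X U c cT p pT hp hpT hlaw J hJ
end

section
/- Let {φ_t}_{t=0}^T be representation maps, each monotone in its third argument, and for t₀ ∈ {0,…,T} define the tail cost J_{t₀}(u,x) = φ_{t₀}(x(t₀),u(t₀), φ_{t₀+1}(x(t₀+1),u(t₀+1), …, φ_T(x(T))…)). Suppose the MSOP initialized at (x_0, 0) has a unique solution (u, x) with u = (u(0),…,u(T−1)), x = (x(0),…,x(T)). Then the family of MSOP's satisfies the Principle of Optimality at x_0: for every t with 0 ≤ t < T, the truncated sequences v = (u(t),…,u(T−1)) and h = (x(t),…,x(T)) solve the MSOP with cost J_t initialized at (x(t), t). -/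
open Set Filter MeasureTheory

/-! If a pair `(u', x')` feasible from `(x t, t)` had a strictly cheaper tail cost than `(u, x)`,
splice it after the first `t` steps of `(u, x)`. The spliced pair is feasible from `(x0, 0)`,
and since `φ 0, …, φ (t - 1)` are monotone in the tail it costs at most as much as `(u, x)`.
By uniqueness it must then be `(u, x)` itself, whose tail is not cheaper than its own. -/

section Nest

variable {α β : Type*} {φ : ℕ → α → β → ℝ → ℝ} {φT : α → ℝ} {X : ℕ → Set α} {U : Set β}
  {u u' : ℕ → β} {x x' : ℕ → α}

theorem nest_congr_s14 :
    ∀ k t, EqOn x x' (Icc t (t + k)) → EqOn u u' (Ico t (t + k)) →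
      nest φ φT u x t k = nest φ φT u' x' t k
  | 0, t, hx, _ => by simp only [nest, hx ⟨le_rfl, by omega⟩]
  | k + 1, t, hx, hu => by
    simp only [nest]
    rw [hx ⟨le_rfl, by omega⟩, hu ⟨le_rfl, by omega⟩,
      nest_congr_s14 k (t + 1) (hx.mono (Icc_subset_Icc (by omega) (by omega)))
        (hu.mono (Ico_subset_Ico (by omega) (by omega)))]

theorem nest_mem_imSet_s14 :
    ∀ k t, (∀ i ∈ Icc t (t + k), x i ∈ X i) → (∀ i ∈ Ico t (t + k), u i ∈ U) →
      nest φ φT u x t k ∈ imSet φ φT X U t k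
  | 0, t, hx, _ => ⟨x t, hx t ⟨le_rfl, by omega⟩, rfl⟩
  | k + 1, t, hx, hu =>
    ⟨x t, hx t ⟨le_rfl, by omega⟩, u t, hu t ⟨le_rfl, by omega⟩, nest φ φT u x (t + 1) k,
      nest_mem_imSet_s14 k (t + 1) (fun i hi => hx i (Icc_subset_Icc (by omega) (by omega) hi))
        (fun i hi => hu i (Ico_subset_Ico (by omega) (by omega) hi)), rfl⟩

theorem nest_sub_of_lt {T s : ℕ} (hs : s < T) :
    nest φ φT u x s (T - s) = φ s (x s) (u s) (nest φ φT u x (s + 1) (T - (s + 1))) := by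
  obtain ⟨k, hk⟩ : ∃ k, T - s = k + 1 := ⟨T - (s + 1), by omega⟩
  rw [hk, show T - (s + 1) = k by omega]
  rfl

theorem nest_le_nest_of_succ_le {T s : ℕ} (hMono : MonoRep T X U φ φT) (hs : s < T)
    (hx : ∀ i ∈ Icc s T, x i ∈ X i) (hu : ∀ i ∈ Ico s T, u i ∈ U)
    (hx' : ∀ i ∈ Icc s T, x' i ∈ X i) (hu' : ∀ i ∈ Ico s T, u' i ∈ U)
    (hxs : x s = x' s) (hus : u s = u' s)
    (h : nest φ φT u x (s + 1) (T - (s + 1)) ≤ nest φ φT u' x' (s + 1) (T - (s + 1))) :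
    nest φ φT u x s (T - s) ≤ nest φ φT u' x' s (T - s) := by
  have hsub : Icc (s + 1) (s + 1 + (T - (s + 1))) ⊆ Icc s T := Icc_subset_Icc (by omega) (by omega)
  have hsub' : Ico (s + 1) (s + 1 + (T - (s + 1))) ⊆ Ico s T := Ico_subset_Ico (by omega) (by omega)
  rw [nest_sub_of_lt hs, nest_sub_of_lt hs, hxs, hus]
  exact hMono s hs _ (hx' s ⟨le_rfl, hs.le⟩) _ (hu' s ⟨le_rfl, hs⟩)
    _ (nest_mem_imSet_s14 _ _ (fun i hi => hx' i (hsub hi)) (fun i hi => hu' i (hsub' hi)))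
    _ (nest_mem_imSet_s14 _ _ (fun i hi => hx i (hsub hi)) (fun i hi => hu i (hsub' hi))) h

theorem nest_le_nest_of_eqOn {T s t : ℕ} (hMono : MonoRep T X U φ φT) (hst : s ≤ t) (htT : t ≤ T)
    (hx : ∀ i ∈ Icc s T, x i ∈ X i) (hu : ∀ i ∈ Ico s T, u i ∈ U)
    (hx' : ∀ i ∈ Icc s T, x' i ∈ X i) (hu' : ∀ i ∈ Ico s T, u' i ∈ U)
    (heqx : EqOn x x' (Ico s t)) (hequ : EqOn u u' (Ico s t))
    (h : nest φ φT u x t (T - t) ≤ nest φ φT u' x' t (T - t)) :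
    nest φ φT u x s (T - s) ≤ nest φ φT u' x' s (T - s) := by
  induction hst using Nat.decreasingInduction with
  | self => exact h
  | of_succ k hk ih =>
    have hsub : Icc (k + 1) T ⊆ Icc k T := Icc_subset_Icc (by omega) le_rfl
    have hsub' : Ico (k + 1) T ⊆ Ico k T := Ico_subset_Ico (by omega) le_rfl
    exact nest_le_nest_of_succ_le hMono (by omega) hx hu hx' hu'
      (heqx ⟨le_rfl, hk⟩) (hequ ⟨le_rfl, hk⟩)
      (ih (fun i hi => hx i (hsub hi)) (fun i hi => hu i (hsub' hi))
        (fun i hi => hx' i (hsub hi)) (fun i hi => hu' i (hsub' hi))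
        (heqx.mono (Ico_subset_Ico (by omega) le_rfl))
        (hequ.mono (Ico_subset_Ico (by omega) le_rfl)))

end Nest

def splice {γ : Type*} (t : ℕ) (v w : ℕ → γ) : ℕ → γ := fun i => if i < t then v i else w i

section Splice

variable {γ : Type*} {t : ℕ} {v w : ℕ → γ}

theorem splice_of_lt {i : ℕ} (hi : i < t) : splice t v w i = v i := if_pos hi

theorem splice_of_le {i : ℕ} (hi : t ≤ i) : splice t v w i = w i := if_neg (not_lt.2 hi)

theorem eqOn_splice_left {s : Set ℕ} (hs : s ⊆ Iio t) : EqOn (splice t v w) v s :=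
  fun _ hi => splice_of_lt (hs hi)

theorem eqOn_splice_right {s : Set ℕ} (hs : s ⊆ Ici t) : EqOn (splice t v w) w s :=
  fun _ hi => splice_of_le (hs hi)

end Splice

namespace FeasFrom

variable {α β : Type*} {T : ℕ} {f : α → β → ℕ → α} {X : ℕ → Set α} {U : Set β} {a : α} {s t : ℕ}
  {u u' : ℕ → β} {x x' : ℕ → α}

theorem mem_X (h : FeasFrom T f X U a s u x) : ∀ i ∈ Icc s T, x i ∈ X i :=
  fun i hi => h.2.1 i hi.1 hi.2

theorem mem_U (h : FeasFrom T f X U a s u x) : ∀ i ∈ Ico s T, u i ∈ U :=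
  fun i hi => (h.2.2 i hi.1 hi.2).1

theorem tail (h : FeasFrom T f X U a s u x) (hst : s ≤ t) : FeasFrom T f X U (x t) t u x :=
  ⟨rfl, fun i hi => h.2.1 i (hst.trans hi), fun i hi => h.2.2 i (hst.trans hi)⟩

theorem splice (h : FeasFrom T f X U a s u x) (hst : s ≤ t)
    (h' : FeasFrom T f X U (x t) t u' x') :
    FeasFrom T f X U a s (_root_.splice t u u') (_root_.splice t x x') := by
  obtain ⟨hxs, hX, hdyn⟩ := h
  obtain ⟨hxt', hX', hdyn'⟩ := h'
  refine ⟨?_, fun i hsi hiT => ?_, fun i hsi hiT => ?_⟩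
  · rcases hst.lt_or_eq with hst | rfl
    · rwa [splice_of_lt hst]
    · rw [splice_of_le le_rfl, hxt', hxs]
  · rcases lt_or_ge i t with hit | hti
    · rw [splice_of_lt hit]; exact hX i hsi hiT
    · rw [splice_of_le hti]; exact hX' i hti hiT
  · rcases lt_or_ge i t with hit | hti
    · rw [splice_of_lt hit, splice_of_lt hit]
      refine ⟨(hdyn i hsi hiT).1, ?_⟩
      rcases (Nat.succ_le_of_lt hit).lt_or_eq with hit' | rfl
      · rw [splice_of_lt hit']; exact (hdyn i hsi hiT).2
      · rw [splice_of_le le_rfl, hxt']; exact (hdyn i hsi hiT).2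
    · rw [splice_of_le hti, splice_of_le hti, splice_of_le (by omega)]
      exact hdyn' i hti hiT

end FeasFrom

theorem principle_of_optimality_general
    {n m : ℕ} (T : ℕ)
    (X : ℕ → Set (Fin n → ℝ)) (U : Set (Fin m → ℝ))
    (f : (Fin n → ℝ) → (Fin m → ℝ) → ℕ → (Fin n → ℝ))
    (φ : ℕ → (Fin n → ℝ) → (Fin m → ℝ) → ℝ → ℝ) (φT : (Fin n → ℝ) → ℝ)
    (hMono : MonoRep T X U φ φT)
    (x0 : Fin n → ℝ)
    (u : ℕ → Fin m → ℝ) (x : ℕ → Fin n → ℝ)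
    (hFeas : FeasFrom T f X U x0 0 u x)
    (hUniq : ∀ u' x', FeasFrom T f X U x0 0 u' x' →
      ((∀ t, t < T → u' t = u t) ∧ ∀ t, t ≤ T → x' t = x t) ∨
        nest φ φT u x 0 T < nest φ φT u' x' 0 T) :
    ∀ t, t < T →
      FeasFrom T f X U (x t) t u x ∧
        ∀ u' x', FeasFrom T f X U (x t) t u' x' →
          nest φ φT u x t (T - t) ≤ nest φ φT u' x' t (T - t) := by
  intro t ht
  refine ⟨hFeas.tail t.zero_le, fun u' x' hF' => ?_⟩
  by_contra! hlt
  have hFeas' : FeasFrom T f X U x0 0 (splice t u u') (splice t x x') :=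
    hFeas.splice t.zero_le hF'
  have htail : nest φ φT (splice t u u') (splice t x x') t (T - t) = nest φ φT u' x' t (T - t) :=
    nest_congr_s14 _ _ (eqOn_splice_right fun _ hi => hi.1) (eqOn_splice_right fun _ hi => hi.1)
  have hle : nest φ φT (splice t u u') (splice t x x') 0 T ≤ nest φ φT u x 0 T :=
    nest_le_nest_of_eqOn hMono t.zero_le ht.le hFeas'.mem_X hFeas'.mem_U hFeas.mem_X hFeas.mem_U
      (eqOn_splice_left fun _ hi => hi.2) (eqOn_splice_left fun _ hi => hi.2) (htail ▸ hlt.le)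
  rcases hUniq _ _ hFeas' with ⟨hu, hx⟩ | hlt0
  · have : nest φ φT (splice t u u') (splice t x x') t (T - t) = nest φ φT u x t (T - t) :=
      nest_congr_s14 _ _ (fun i hi => hx i (by grind)) (fun i hi => hu i (by grind))
    linarith
  · linarith

/-- (Principle of Optimality.) Let `{φ_t}` be representation
maps, monotone in the third argument, and let the tail costs be
`J_{t₀}(u,x) = φ_{t₀}(x t₀, u t₀, …, φ_T(x T)…) = nest φ φT u x t₀ (T - t₀)`.
If the MSOP initialized at `(x0, 0)` has the unique solution `(u, x)`, then for
every `t < T` the truncated sequences solve the MSOP with cost `J_t`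
initialized at `(x t, t)`. -/
theorem principle_of_optimality
    {n m : ℕ} (T : ℕ) (hT : 1 ≤ T)
    (X : ℕ → Set (Fin n → ℝ)) (U : Set (Fin m → ℝ))
    (f : (Fin n → ℝ) → (Fin m → ℝ) → ℕ → (Fin n → ℝ))
    (φ : ℕ → (Fin n → ℝ) → (Fin m → ℝ) → ℝ → ℝ) (φT : (Fin n → ℝ) → ℝ)
    (hMono : MonoRep T X U φ φT)
    (x0 : Fin n → ℝ) (hx0 : x0 ∈ X 0)
    (u : ℕ → Fin m → ℝ) (x : ℕ → Fin n → ℝ)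
    (hFeas : FeasFrom T f X U x0 0 u x)
    (hOpt : ∀ u' x', FeasFrom T f X U x0 0 u' x' →
      nest φ φT u x 0 T ≤ nest φ φT u' x' 0 T)
    (hUniq : ∀ u' x', FeasFrom T f X U x0 0 u' x' →
      ((∀ t, t < T → u' t = u t) ∧ ∀ t, t ≤ T → x' t = x t) ∨
        nest φ φT u x 0 T < nest φ φT u' x' 0 T) :
    ∀ t, t < T →
      FeasFrom T f X U (x t) t u x ∧
        ∀ u' x', FeasFrom T f X U (x t) t u' x' →
          nest φ φT u x t (T - t) ≤ nest φ φT u' x' t (T - t) :=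
  principle_of_optimality_general T X U f φ φT hMono x0 u x hFeas hUniq
end

section
/- Fix h > 0 and T = 3, and consider n = m = 1, X_t = [0,h] for t = 0,…,3, U = {−h, 0, h}, f(x,u,t) = x + u, x_0 = 0, with c_0(u) = −u, c_1(u) = u, c_2(u) = −u/2 and d(x) = x. The MSOP initialized at (0,0) with cost J_0(u,x) = c_0(u(0)) + c_1(u(1)) + c_2(u(2)) + max_{0≤s≤3} x(s) has the unique solution u* = (h, −h, h) with trajectory x* = (0, h, 0, h); yet the truncated sequences v = (h), h-traj = (0, h) do NOT solve the MSOP initialized at (0,2) with cost J_2(u,x) = c_2(u(2)) + max_{2≤s≤3} x(s), whose unique optimal input is u(2) = 0 (cost 0 versus h/2). Hence this family of MSOP's does not satisfy the Principle of Optimality at x_0 = 0 even though the MSOP initialized at (0,0) has a unique solution. -/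
open Set Filter MeasureTheory

/-! Along a feasible trajectory from `0` the input is the increment of the state and the
state only takes the values `0` and `h`, so `J₀` is a function of `(x 1, x 2, x 3) ∈ {0, h}³`,
minimised only at `(h, 0, h)`. The running maximum in `J₀` is already paid for by the visit
to `h` at time `1`; from `(0, 2)` it is not, and there `x 3 = u 2 ≥ 0` gives `J₂ = u 2 / 2`. -/

lemma add_mem_pair_of_mem_Icc {h a v : ℝ} (ha : a ∈ ({0, h} : Set ℝ))
    (hv : v ∈ ({-h, 0, h} : Set ℝ)) (hav : a + v ∈ Icc 0 h) : a + v ∈ ({0, h} : Set ℝ) := by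
  obtain ⟨h0, h1⟩ := hav
  rw [mem_insert_iff, mem_singleton_iff]
  rcases ha with rfl | rfl <;> rcases hv with hv | hv | hv <;> subst v <;>
    first | (left; linarith) | (right; linarith)

lemma eq_or_neg_three_halves_lt {h a b c : ℝ} (hh : 0 < h) (ha : a ∈ ({0, h} : Set ℝ))
    (hb : b ∈ ({0, h} : Set ℝ)) (hc : c ∈ ({0, h} : Set ℝ)) :
    (a = h ∧ b = 0 ∧ c = h) ∨
      -(3 * h) / 2 < -2 * a + 3 / 2 * b - c / 2 + max (max (max 0 a) b) c := by
  rcases ha with rfl | rfl <;> rcases hb with rfl | rfl <;> rcases hc with rfl | rfl <;>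
    first
    | exact Or.inl ⟨rfl, rfl, rfl⟩
    | (right; simp only [max_self, max_eq_left hh.le, max_eq_right hh.le]; linarith)

namespace FeasFrom

lemma tail_s15 {α β : Type*} {T s r : ℕ} {f : α → β → ℕ → α} {X : ℕ → Set α} {U : Set β}
    {x₀ : α} {u : ℕ → β} {x : ℕ → α} (hfeas : FeasFrom T f X U x₀ s u x) (hsr : s ≤ r) :
    FeasFrom T f X U (x r) r u x :=
  ⟨rfl, fun t hrt htT => hfeas.2.1 t (hsr.trans hrt) htT,
    fun t hrt htT => hfeas.2.2 t (hsr.trans hrt) htT⟩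

variable {T s : ℕ}

lemma input_eq_sub {α : Type*} [AddCommGroup α] {f : α → α → ℕ → α} {X : ℕ → Set α}
    {U : Set α} {x₀ : α} {u x : ℕ → α} (hf : ∀ y v t, f y v t = y + v)
    (hfeas : FeasFrom T f X U x₀ s u x) {t : ℕ} (hst : s ≤ t) (htT : t < T) :
    u t = x (t + 1) - x t := by
  rw [(hfeas.2.2 t hst htT).2, hf, add_sub_cancel_left]

lemma input_eq_of_state_eq {α : Type*} [AddCommGroup α] {f : α → α → ℕ → α}
    {X : ℕ → Set α} {U : Set α} {x₀ x₀' : α} {u x u' x' : ℕ → α}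
    (hf : ∀ y v t, f y v t = y + v) (hfeas : FeasFrom T f X U x₀ s u x)
    (hfeas' : FeasFrom T f X U x₀' s u' x') (hx : ∀ t, s ≤ t → t ≤ T → x t = x' t) {t : ℕ}
    (hst : s ≤ t) (htT : t < T) : u t = u' t := by
  rw [hfeas.input_eq_sub hf hst htT, hfeas'.input_eq_sub hf hst htT,
    hx (t + 1) (hst.trans t.le_succ) htT, hx t hst htT.le]

variable {f : ℝ → ℝ → ℕ → ℝ} {X : ℕ → Set ℝ} {U : Set ℝ} {u x : ℕ → ℝ}

lemma mem_pair {h x₀ : ℝ} (hX : ∀ t, X t = Icc 0 h) (hU : U = {-h, 0, h})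
    (hf : ∀ y v t, f y v t = y + v) (hfeas : FeasFrom T f X U x₀ s u x)
    (hx₀ : x₀ ∈ ({0, h} : Set ℝ)) {t : ℕ} (hst : s ≤ t) (htT : t ≤ T) :
    x t ∈ ({0, h} : Set ℝ) := by
  induction t, hst using Nat.le_induction with
  | base => exact hfeas.1 ▸ hx₀
  | succ t hst ih =>
    obtain ⟨hu, hx⟩ := hfeas.2.2 t hst htT
    have hmem := hfeas.2.1 (t + 1) (hst.trans t.le_succ) htT
    rw [hx, hf] at hmem ⊢
    exact add_mem_pair_of_mem_Icc (ih (by omega)) (hU ▸ hu) (hX _ ▸ hmem)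

lemma cost_eq_of_add (hf : ∀ y v t, f y v t = y + v) (hfeas : FeasFrom 3 f X U 0 0 u x) :
    -(u 0) + u 1 + -(u 2) / 2 + max (max (max (x 0) (x 1)) (x 2)) (x 3) =
      -2 * x 1 + 3 / 2 * x 2 - x 3 / 2 + max (max (max 0 (x 1)) (x 2)) (x 3) := by
  rw [hfeas.input_eq_sub hf (t := 0) le_rfl (by norm_num),
    hfeas.input_eq_sub hf (t := 1) (by norm_num) (by norm_num),
    hfeas.input_eq_sub hf (t := 2) (by norm_num) (by norm_num), hfeas.1]
  ring

lemma states_eq_or_neg_three_halves_lt {h : ℝ} (hh : 0 < h) (hX : ∀ t, X t = Icc 0 h)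
    (hU : U = {-h, 0, h}) (hf : ∀ y v t, f y v t = y + v) (hfeas : FeasFrom 3 f X U 0 0 u x) :
    (x 1 = h ∧ x 2 = 0 ∧ x 3 = h) ∨
      -(3 * h) / 2 < -2 * x 1 + 3 / 2 * x 2 - x 3 / 2 + max (max (max 0 (x 1)) (x 2)) (x 3) :=
  have hpair (t : ℕ) (ht : t ≤ 3) : x t ∈ ({0, h} : Set ℝ) :=
    hfeas.mem_pair hX hU hf (by simp) t.zero_le ht
  eq_or_neg_three_halves_lt hh (hpair 1 (by norm_num)) (hpair 2 (by norm_num))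
    (hpair 3 (by norm_num))

lemma half_cost_eq_of_add (hf : ∀ y v t, f y v t = y + v) (hX : X (s + 1) ⊆ Ici 0)
    (hfeas : FeasFrom T f X U 0 s u x) (hsT : s < T) :
    -(u s) / 2 + max (x s) (x (s + 1)) = u s / 2 ∧ 0 ≤ u s := by
  have hx : x (s + 1) = u s := by rw [(hfeas.2.2 s le_rfl hsT).2, hf, hfeas.1, zero_add]
  have hu : 0 ≤ u s := hx ▸ hX (hfeas.2.1 (s + 1) s.le_succ hsT)
  refine ⟨?_, hu⟩
  rw [hfeas.1, hx, max_eq_right hu]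
  ring

end FeasFrom

/-- (Violation of the Principle of Optimality.) With `T = 3`,
`X_t = [0,h]`, `U = {-h,0,h}`, `f(x,u,t) = x + u`, `x_0 = 0`, cost
`J_0(u,x) = -u(0) + u(1) - u(2)/2 + max_{0≤s≤3} x(s)`, the MSOP initialized at
`(0,0)` has the unique solution `u* = (h,-h,h)`, `x* = (0,h,0,h)`; yet the
truncation of `(u*,x*)` is feasible but not optimal for the MSOP at `(0,2)`
with cost `J_2(u,x) = -u(2)/2 + max_{2≤s≤3} x(s)`, whose unique optimal input
is `u(2) = 0` (cost `0` versus `h/2`). Hence the family of MSOP's does not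
satisfy the Principle of Optimality at `x_0 = 0` even though the MSOP at
`(0,0)` has a unique solution. -/
theorem principle_of_optimality_counterexample
    (h : ℝ) (hh : 0 < h)
    (X : ℕ → Set ℝ) (hX : ∀ t, X t = Set.Icc 0 h)
    (U : Set ℝ) (hU : U = {-h, 0, h})
    (f : ℝ → ℝ → ℕ → ℝ) (hf : ∀ x v t, f x v t = x + v)
    (J0 J2 : (ℕ → ℝ) → (ℕ → ℝ) → ℝ)
    (hJ0 : ∀ u x, J0 u x =
      (-(u 0) + u 1 + -(u 2) / 2) + max (max (max (x 0) (x 1)) (x 2)) (x 3))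
    (hJ2 : ∀ u x, J2 u x = -(u 2) / 2 + max (x 2) (x 3))
    (ustar xstar : ℕ → ℝ)
    (hu0 : ustar 0 = h) (hu1 : ustar 1 = -h) (hu2 : ustar 2 = h)
    (hx0 : xstar 0 = 0) (hx1 : xstar 1 = h) (hx2 : xstar 2 = 0) (hx3 : xstar 3 = h) :
    -- `(u*, x*)` is the unique solution of the MSOP initialized at `(0,0)`:
    (FeasFrom 3 f X U 0 0 ustar xstar ∧
      (∀ u x, FeasFrom 3 f X U 0 0 u x → J0 ustar xstar ≤ J0 u x) ∧
      ∀ u x, FeasFrom 3 f X U 0 0 u x →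
        ((∀ t, t < 3 → u t = ustar t) ∧ ∀ t, t ≤ 3 → x t = xstar t) ∨
          J0 ustar xstar < J0 u x) ∧
    -- the truncation is feasible but does NOT solve the MSOP initialized at `(0,2)`:
    (FeasFrom 3 f X U (xstar 2) 2 ustar xstar ∧
      ¬ ∀ u x, FeasFrom 3 f X U (xstar 2) 2 u x → J2 ustar xstar ≤ J2 u x) ∧
    -- at `(0,2)` the unique optimal input is `u(2) = 0`, with cost `0` versus `h/2`:
    ∀ u x, FeasFrom 3 f X U 0 2 u x →
      (u 2 = 0 → J2 u x = 0) ∧ (u 2 = h → J2 u x = h / 2) ∧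
        (u 2 ≠ 0 → 0 < J2 u x) := by
  have hstar : FeasFrom 3 f X U 0 0 ustar xstar := by
    refine ⟨hx0, fun t _ ht => ?_, fun t _ ht => ?_⟩ <;> interval_cases t <;>
      simp [hX, hU, hf, hu0, hu1, hu2, hx0, hx1, hx2, hx3, hh.le]
  have hJ0_eq : ∀ u x, FeasFrom 3 f X U 0 0 u x →
      J0 u x = -2 * x 1 + 3 / 2 * x 2 - x 3 / 2 + max (max (max 0 (x 1)) (x 2)) (x 3) :=
    fun u x hfeas => (hJ0 u x).trans (hfeas.cost_eq_of_add hf)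
  have hJ2_eq : ∀ u x, FeasFrom 3 f X U 0 2 u x → J2 u x = u 2 / 2 ∧ 0 ≤ u 2 := by
    intro u x hfeas
    rw [hJ2]
    exact hfeas.half_cost_eq_of_add hf (fun y hy => (hX 3 ▸ hy).1) (by norm_num)
  have huniq : ∀ u x, FeasFrom 3 f X U 0 0 u x →
      ((∀ t, t < 3 → u t = ustar t) ∧ ∀ t, t ≤ 3 → x t = xstar t) ∨
        J0 ustar xstar < J0 u x := by
    intro u x hfeas
    rw [hJ0_eq _ _ hstar, hJ0_eq _ _ hfeas, hx1, hx2, hx3]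
    rcases hfeas.states_eq_or_neg_three_halves_lt hh hX hU hf with ⟨e1, e2, e3⟩ | hlt
    · have hx : ∀ t ≤ 3, x t = xstar t := by
        intro t ht
        interval_cases t <;> simp [hfeas.1, hx0, e1, hx1, e2, hx2, e3, hx3]
      exact Or.inl ⟨fun t ht => hfeas.input_eq_of_state_eq hf hstar (fun t _ => hx t)
        t.zero_le ht, hx⟩
    · right
      simp only [max_self, max_eq_left hh.le, max_eq_right hh.le]
      linarith
  have htail : FeasFrom 3 f X U (xstar 2) 2 ustar xstar := hstar.tail_s15 (by norm_num)
  have hzero : FeasFrom 3 f X U 0 2 (fun _ => 0) (fun _ => 0) := by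
    refine ⟨rfl, fun t _ _ => ?_, fun t _ _ => ?_⟩ <;> simp [hX, hU, hf, hh.le]
  refine ⟨⟨hstar, fun u x hfeas => ?_, huniq⟩, ⟨htail, fun hopt => ?_⟩, fun u x hfeas => ?_⟩
  · rcases huniq u x hfeas with ⟨-, hx⟩ | hlt
    · rw [hJ0_eq _ _ hfeas, hJ0_eq _ _ hstar, hx 1 (by norm_num), hx 2 (by norm_num),
        hx 3 (by norm_num)]
    · exact hlt.le
  · have hstar_cost := (hJ2_eq _ _ (hx2 ▸ htail)).1
    have hzero_cost := (hJ2_eq _ _ hzero).1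
    have := hopt (fun _ => 0) (fun _ => 0) (by rwa [hx2])
    rw [hu2] at hstar_cost
    linarith
  · obtain ⟨hcost, hu⟩ := hJ2_eq u x hfeas
    refine ⟨fun e => by rw [hcost, e, zero_div], fun e => by rw [hcost, e], fun e => ?_⟩
    rw [hcost]
    exact half_pos (lt_of_le_of_ne hu (Ne.symm e))
end
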